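/- arXiv:1402.0333 — 9 statements merged into one kernel-verified Lean document; each statement's English description precedes it below -/
import Mathlib

section
/- Let p be an odd prime and n a positive integer such that p − 1 divides n. Then ∑_{j=1}^{n/(p−1) − 1} (−1)^{j(p−1)/2} · C(n, j(p−1)) ≡ −1 (mod p) if p ≡ 3 (mod 4) and p + 1 divides n/(p−1), and ≡ 0 (mod p) otherwise. -/
/-!
Write `n = (p - 1) m` and let `i` be a square root of `-1` in an extension of `𝔽_p`. Summing the
binomial expansion of `(1 + a i)^n` over `a ∈ 𝔽_p` keeps exactly the terms whose index is a
positive multiple of `p - 1`, and `i^(j(p-1)) = (-1)^(j(p-1)/2)`; so the lacunary sum equals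
`-(-1)^(m(p-1)/2) - ∑_a (1 + a i)^n` in characteristic `p`.

If `p ≡ 1 (mod 4)` then `i ∈ 𝔽_p`, the map `a ↦ 1 + a i` permutes `𝔽_p`, and `∑_b b^n = -1`.
If `p ≡ 3 (mod 4)`, work in `𝔽_{p²}`, where Frobenius sends `1 + a i` to `1 - a i`. Then
`(1 + a i)^(p-1) = (1 - a i)/(1 + a i)`, and this Cayley transform maps `𝔽_p` bijectively onto
the `(p+1)`-st roots of unity other than `-1`, whose `m`-th powers sum to `[p + 1 ∣ m] - (-1)^m`.
-/

open Finset

theorem FiniteField.sum_pow_eq_ite {K : Type*} [Field K] [Fintype K] (r : ℕ) :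
    ∑ x : K, x ^ r = if r ≠ 0 ∧ Fintype.card K - 1 ∣ r then -1 else 0 := by
  classical
  rcases eq_or_ne r 0 with rfl | hr
  · simp
  let φ : Kˣ ↪ K := ⟨fun x ↦ x, Units.val_injective⟩
  have hφ : univ.map φ = univ \ {0} := by
    ext x
    simpa only [mem_map, mem_univ, Function.Embedding.coeFn_mk, true_and, mem_sdiff,
      mem_singleton, φ] using! isUnit_iff_ne_zero
  calc ∑ x : K, x ^ r = ∑ x ∈ univ \ {(0 : K)}, x ^ r := by
        rw [← sum_sdiff ({0} : Finset K).subset_univ, sum_singleton, zero_pow hr, add_zero]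
    _ = ∑ x : Kˣ, (x ^ r : K) := by simp [φ, ← hφ, univ.sum_map φ]
    _ = _ := by rw [FiniteField.sum_pow_units K r]; simp [hr]

theorem Nat.sum_Icc_mul_eq_sum_filter_dvd {M : Type*} [AddCommMonoid M] {d : ℕ} (hd : 0 < d)
    (n : ℕ) (f : ℕ → M) :
    ∑ j ∈ Icc 1 (n / d), f (j * d) = ∑ r ∈ range (n + 1) with r ≠ 0 ∧ d ∣ r, f r := by
  have himage : (Icc 1 (n / d)).image (· * d) = {r ∈ range (n + 1) | r ≠ 0 ∧ d ∣ r} := by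
    ext r
    simp only [mem_image, mem_Icc, mem_filter, mem_range]
    constructor
    · rintro ⟨j, ⟨hj1, hjn⟩, rfl⟩
      refine ⟨?_, by positivity, dvd_mul_left d j⟩
      have := (Nat.le_div_iff_mul_le hd).mp hjn
      omega
    · rintro ⟨hrn, hr0, j, rfl⟩
      refine ⟨j, ⟨Nat.pos_of_ne_zero (by rintro rfl; simp at hr0), ?_⟩, mul_comm j d⟩
      exact (Nat.le_div_iff_mul_le hd).mpr (by rw [mul_comm]; omega)
  rw [← himage, sum_image fun j _ k _ h ↦ Nat.eq_of_mul_eq_mul_right hd h]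

theorem ZMod.sum_one_add_smul_pow {p : ℕ} [Fact p.Prime] {R : Type*} [CommRing R]
    [Algebra (ZMod p) R] (x : R) (n : ℕ) :
    ∑ a : ZMod p, (1 + a • x) ^ n =
      -∑ j ∈ Icc 1 (n / (p - 1)), x ^ (j * (p - 1)) * n.choose (j * (p - 1)) := by
  have hp : 0 < p - 1 := Nat.sub_pos_of_lt (Fact.out : p.Prime).one_lt
  calc ∑ a : ZMod p, (1 + a • x) ^ n
      = ∑ r ∈ range (n + 1), (∑ a : ZMod p, a ^ r) • (x ^ r * n.choose r) := by
        simp_rw [sum_smul, ← smul_mul_assoc, ← _root_.smul_pow]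
        rw [sum_comm]
        refine sum_congr rfl fun a _ ↦ ?_
        rw [add_comm, add_pow]
        simp only [one_pow, mul_one]
    _ = -∑ r ∈ range (n + 1) with r ≠ 0 ∧ p - 1 ∣ r, x ^ r * n.choose r := by
        rw [sum_filter, ← sum_neg_distrib]
        refine sum_congr rfl fun r _ ↦ ?_
        rw [FiniteField.sum_pow_eq_ite, ZMod.card]
        split_ifs <;> simp
    _ = _ := by rw [Nat.sum_Icc_mul_eq_sum_filter_dvd hp n fun r ↦ x ^ r * (n.choose r : R)]

theorem FiniteField.exists_isPrimitiveRoot {K : Type*} [Field K] [Fintype K] {k : ℕ}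
    (hk : k ∣ Fintype.card K - 1) : ∃ ζ : K, IsPrimitiveRoot ζ k := by
  classical
  obtain ⟨g, hg⟩ := IsCyclic.exists_generator (α := Kˣ)
  have hord : orderOf g = Fintype.card K - 1 := by
    rw [orderOf_eq_card_of_forall_mem_zpowers hg, Nat.card_eq_fintype_card, Fintype.card_units]
  have hpos : orderOf g ≠ 0 := by have := Fintype.one_lt_card (α := K); omega
  refine ⟨(g ^ (orderOf g / k) : Kˣ), ?_⟩
  rw [IsPrimitiveRoot.coe_units_iff]
  simpa only [orderOf_pow_orderOf_div hpos (hord ▸ hk)] using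
    IsPrimitiveRoot.orderOf (g ^ (orderOf g / k))

theorem Polynomial.neg_one_mem_nthRootsFinset {R : Type*} [CommRing R] [IsDomain R]
    [DecidableEq R] {n : ℕ} (hn : Even n) (hn0 : n ≠ 0) :
    (-1 : R) ∈ nthRootsFinset n (1 : R) := by
  rw [mem_nthRootsFinset (Nat.pos_of_ne_zero hn0), hn.neg_one_pow]

theorem IsPrimitiveRoot.sum_nthRootsFinset_pow {K : Type*} [CommRing K] [IsDomain K] {ζ : K}
    {k : ℕ} [NeZero k] (hζ : IsPrimitiveRoot ζ k) (m : ℕ) :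
    ∑ u ∈ Polynomial.nthRootsFinset k (1 : K), u ^ m = if k ∣ m then (k : K) else 0 := by
  have hmem (u : K) : u ∈ Polynomial.nthRootsFinset k (1 : K) ↔ u ^ k = 1 :=
    Polynomial.mem_nthRootsFinset (NeZero.pos k) 1
  split_ifs with hkm
  · obtain ⟨l, rfl⟩ := hkm
    rw [sum_congr rfl fun u hu ↦ by rw [pow_mul, (hmem u).mp hu, one_pow], sum_const,
      hζ.card_nthRootsFinset, nsmul_one]
  · have hζm : ζ ^ m ≠ 1 := (hζ.pow_eq_one_iff_dvd m).not.mpr hkm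
    have hpow : ζ ^ (k - 1) * ζ = 1 := by
      rw [← pow_succ, Nat.sub_add_cancel (NeZero.pos k), hζ.pow_eq_one]
    have hrot : ∑ u ∈ Polynomial.nthRootsFinset k (1 : K), (ζ * u) ^ m =
        ∑ u ∈ Polynomial.nthRootsFinset k (1 : K), u ^ m := by
      refine sum_nbij' (ζ * ·) (ζ ^ (k - 1) * ·) (fun u hu ↦ ?_) (fun u hu ↦ ?_) (fun u _ ↦ ?_)
        (fun u _ ↦ ?_) fun _ _ ↦ rfl
      · simp only [hmem] at hu ⊢
        rw [mul_pow, hu, hζ.pow_eq_one, one_mul]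
      · simp only [hmem] at hu ⊢
        rw [mul_pow, hu, mul_one, pow_right_comm, hζ.pow_eq_one, one_pow]
      · rw [← mul_assoc, hpow, one_mul]
      · rw [← mul_assoc, mul_comm ζ, hpow, one_mul]
    simp only [mul_pow, ← mul_sum] at hrot
    by_contra hS
    exact hζm ((mul_eq_right₀ hS).mp hrot)

theorem pow_eq_neg_self_of_sq_eq_neg_one {R : Type*} [Monoid R] [HasDistribNeg R] {i : R}
    (hi : i ^ 2 = -1) {n : ℕ} (hn : n % 4 = 3) : i ^ n = -i := by
  rw [← Nat.div_add_mod n 4, hn, pow_add, pow_mul, show 4 = 2 * 2 from rfl, pow_mul, hi]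
  simp [pow_succ, hi]

section CayleyTransform

variable {p : ℕ} [Fact p.Prime] {F : Type*} [Field F] [Algebra (ZMod p) F] {i : F}

theorem one_add_smul_ne_zero (hp : p % 4 = 3) (hi : i ^ 2 = -1) (a : ZMod p) :
    1 + a • i ≠ 0 := by
  intro h
  have hsq : algebraMap (ZMod p) F (a ^ 2 + 1) = 0 := by
    rw [Algebra.smul_def] at h
    rw [map_add, map_pow, map_one]
    linear_combination (1 - algebraMap (ZMod p) F a * i) * h + algebraMap (ZMod p) F a ^ 2 * hi
  refine ZMod.exists_sq_eq_neg_one_iff.mp ⟨a, ?_⟩ hp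
  rw [map_eq_zero_iff _ (algebraMap (ZMod p) F).injective] at hsq
  linear_combination -hsq

theorem one_add_smul_pow_char (hp : p % 4 = 3) (hi : i ^ 2 = -1) (a : ZMod p) :
    (1 + a • i) ^ p = 1 - a • i := by
  have := charP_of_injective_algebraMap' (ZMod p) (A := F) p
  rw [add_pow_char, one_pow, smul_pow, ZMod.pow_card, pow_eq_neg_self_of_sq_eq_neg_one hi hp,
    smul_neg, sub_eq_add_neg]

theorem one_add_smul_pow_pred_mul_self (hp : p % 4 = 3) (hi : i ^ 2 = -1) (a : ZMod p) :
    (1 + a • i) ^ (p - 1) * (1 + a • i) = 1 - a • i := by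
  rw [← pow_succ, Nat.sub_add_cancel (Fact.out : p.Prime).one_le, one_add_smul_pow_char hp hi]

theorem one_add_smul_pow_pred_injective (hp : p % 4 = 3) (hi : i ^ 2 = -1) :
    Function.Injective fun a : ZMod p ↦ (1 + a • i) ^ (p - 1) := by
  have := charP_of_injective_algebraMap' (ZMod p) (A := F) p
  have h2 : (2 : F) ≠ 0 := Ring.two_ne_zero (by rw [ringChar.eq F p]; omega)
  have hi0 : i ≠ 0 := by rintro rfl; norm_num at hi
  intro a b hab
  have ha := one_add_smul_pow_pred_mul_self hp hi a
  have hb := one_add_smul_pow_pred_mul_self hp hi b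
  simp only [Algebra.smul_def] at ha hb hab
  set A := algebraMap (ZMod p) F a
  set B := algebraMap (ZMod p) F b
  have hsub : 2 * i * algebraMap (ZMod p) F (b - a) = 0 := by
    rw [map_sub]
    linear_combination -(1 + B * i) * ha + (1 + A * i) * hb + (1 + A * i) * (1 + B * i) * hab
  rw [mul_eq_zero, mul_eq_zero, map_eq_zero_iff _ (algebraMap (ZMod p) F).injective,
    sub_eq_zero] at hsub
  exact (hsub.resolve_left (not_or.mpr ⟨h2, hi0⟩)).symm

theorem image_one_add_smul_pow_pred [DecidableEq F] (hp : p % 4 = 3) (hi : i ^ 2 = -1) {ζ : F}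
    (hζ : IsPrimitiveRoot ζ (p + 1)) :
    univ.image (fun a : ZMod p ↦ (1 + a • i) ^ (p - 1)) =
      (Polynomial.nthRootsFinset (p + 1) (1 : F)).erase (-1) := by
  have := charP_of_injective_algebraMap' (ZMod p) (A := F) p
  have hp1 : (p - 1) * (p + 1) + 1 = p * p := by
    have := (Fact.out : p.Prime).one_le
    zify [this]
    ring
  have hmaps (a : ZMod p) :
      (1 + a • i) ^ (p - 1) ∈ (Polynomial.nthRootsFinset (p + 1) (1 : F)).erase (-1) := by
    have hconj := one_add_smul_pow_pred_mul_self hp hi a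
    rw [mem_erase, Polynomial.mem_nthRootsFinset (by omega)]
    constructor
    · intro h
      rw [h] at hconj
      exact Ring.two_ne_zero (by rw [ringChar.eq F p]; omega) (by linear_combination -hconj)
    -- applying Frobenius twice returns `1 + a • i`
    · apply mul_right_cancel₀ (one_add_smul_ne_zero hp hi a)
      rw [← pow_mul, ← pow_succ, one_mul, hp1, pow_mul, one_add_smul_pow_char hp hi,
        sub_eq_add_neg, ← neg_smul, one_add_smul_pow_char hp hi, neg_smul, sub_neg_eq_add]
  refine eq_of_subset_of_card_le (image_subset_iff.mpr fun a _ ↦ hmaps a) ?_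
  rw [card_erase_of_mem
      (Polynomial.neg_one_mem_nthRootsFinset (by rw [Nat.even_iff]; omega) (by omega)),
    hζ.card_nthRootsFinset, card_image_of_injective _ (one_add_smul_pow_pred_injective hp hi),
    card_univ, ZMod.card, Nat.add_sub_cancel]

theorem sum_one_add_smul_pow_pred_mul (hp : p % 4 = 3) (hi : i ^ 2 = -1) {ζ : F}
    (hζ : IsPrimitiveRoot ζ (p + 1)) (m : ℕ) :
    ∑ a : ZMod p, (1 + a • i) ^ ((p - 1) * m) = (if p + 1 ∣ m then 1 else 0) - (-1) ^ m := by
  classical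
  have := charP_of_injective_algebraMap' (ZMod p) (A := F) p
  simp_rw [pow_mul]
  rw [← sum_image (f := (· ^ m)) fun a _ b _ h ↦ one_add_smul_pow_pred_injective hp hi h,
    image_one_add_smul_pow_pred hp hi hζ, sum_erase_eq_sub
      (Polynomial.neg_one_mem_nthRootsFinset (by rw [Nat.even_iff]; omega) (by omega)),
    hζ.sum_nthRootsFinset_pow, Nat.cast_add, CharP.cast_eq_zero, zero_add, Nat.cast_one]

end CayleyTransform

theorem sum_neg_one_pow_mul_choose_eq {p : ℕ} [Fact p.Prime] (hp : Odd p) {R : Type*}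
    [CommRing R] [Algebra (ZMod p) R] {i : R} (hi : i ^ 2 = -1) {m : ℕ} (hm : 0 < m) :
    ∑ j ∈ Icc 1 (m - 1), (-1 : R) ^ (j * (p - 1) / 2) * ((p - 1) * m).choose (j * (p - 1)) =
      -((-1) ^ ((p - 1) / 2)) ^ m - ∑ a : ZMod p, (1 + a • i) ^ ((p - 1) * m) := by
  have hp1 : 0 < p - 1 := Nat.sub_pos_of_lt (Fact.out : p.Prime).one_lt
  have hev : Even (p - 1) := hp.tsub_odd odd_one
  have hsign (j : ℕ) : i ^ (j * (p - 1)) = (-1) ^ (j * (p - 1) / 2) := by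
    rw [← hi, ← pow_mul, Nat.two_mul_div_two_of_even (hev.mul_left j)]
  obtain ⟨k, rfl⟩ : ∃ k, m = k + 1 := ⟨m - 1, by omega⟩
  rw [ZMod.sum_one_add_smul_pow, Nat.mul_div_cancel_left _ hp1, sum_Icc_succ_top (by omega),
    Nat.add_sub_cancel, mul_comm (p - 1) (k + 1), Nat.choose_self]
  simp only [hsign]
  rw [Nat.mul_div_assoc _ hev.two_dvd, pow_mul']
  ring

theorem sum_neg_one_pow_mul_choose_of_mod_four_eq_one {p : ℕ} [Fact p.Prime] (hp : p % 4 = 1)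
    {m : ℕ} (hm : 0 < m) :
    ∑ j ∈ Icc 1 (m - 1),
      (-1 : ZMod p) ^ (j * (p - 1) / 2) * ((p - 1) * m).choose (j * (p - 1)) = 0 := by
  obtain ⟨i, hi⟩ := ZMod.exists_sq_eq_neg_one_iff.mpr (by omega : p % 4 ≠ 3)
  have hi0 : i ≠ 0 := by rintro rfl; simp at hi
  have hshift : ∑ a : ZMod p, (1 + a • i) ^ ((p - 1) * m) = ∑ b : ZMod p, b ^ ((p - 1) * m) :=
    Fintype.sum_bijective _ ((Equiv.mulRight₀ i hi0).trans (Equiv.addLeft 1)).bijective _ _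
      fun _ ↦ rfl
  rw [sum_neg_one_pow_mul_choose_eq (Nat.odd_iff.mpr (by omega)) (by rw [sq, ← hi]) hm, hshift,
    FiniteField.sum_pow_eq_ite, ZMod.card, Even.neg_one_pow (by rw [Nat.even_iff]; omega),
    if_pos ⟨Nat.mul_ne_zero (Nat.sub_ne_zero_of_lt (Fact.out : p.Prime).one_lt) hm.ne',
      dvd_mul_right _ _⟩]
  ring

theorem sum_neg_one_pow_mul_choose_of_mod_four_eq_three {p : ℕ} [Fact p.Prime] {F : Type*}
    [Field F] [Algebra (ZMod p) F] (hp : p % 4 = 3) {i : F} (hi : i ^ 2 = -1) {ζ : F}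
    (hζ : IsPrimitiveRoot ζ (p + 1)) {m : ℕ} (hm : 0 < m) :
    ∑ j ∈ Icc 1 (m - 1), (-1 : F) ^ (j * (p - 1) / 2) * ((p - 1) * m).choose (j * (p - 1)) =
      -if p + 1 ∣ m then 1 else 0 := by
  rw [sum_neg_one_pow_mul_choose_eq (Nat.odd_iff.mpr (by omega)) hi hm,
    sum_one_add_smul_pow_pred_mul hp hi hζ, Odd.neg_one_pow (by rw [Nat.odd_iff]; omega)]
  ring

theorem alternating_lacunary_binomial_sum (p n : ℕ) (hp : p.Prime) (hpodd : Odd p)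
    (hn : 0 < n) (hdvd : (p - 1) ∣ n) :
    (p : ℤ) ∣ (∑ j ∈ Finset.Icc 1 (n / (p - 1) - 1),
        (-1) ^ (j * (p - 1) / 2) * (n.choose (j * (p - 1)) : ℤ)) -
      (if p % 4 = 3 ∧ (p + 1) ∣ n / (p - 1) then -1 else 0) := by
  have := Fact.mk hp
  obtain ⟨m, rfl⟩ := hdvd
  have hm : 0 < m := Nat.pos_of_mul_pos_left hn
  rw [Nat.mul_div_cancel_left m (by have := hp.two_le; omega)]
  rcases Nat.odd_mod_four_iff.mp (Nat.odd_iff.mp hpodd) with hp4 | hp4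
  · rw [if_neg (by omega), sub_zero, ← ZMod.intCast_zmod_eq_zero_iff_dvd]
    push_cast
    exact sum_neg_one_pow_mul_choose_of_mod_four_eq_one hp4 hm
  · have : Fintype (GaloisField p 2) := Fintype.ofFinite _
    have hcard : Fintype.card (GaloisField p 2) = p ^ 2 := by
      rw [← Nat.card_eq_fintype_card, GaloisField.card p 2 two_ne_zero]
    obtain ⟨ζ, hζ⟩ := FiniteField.exists_isPrimitiveRoot (K := GaloisField p 2) (k := p + 1)
      ⟨p - 1, by rw [hcard, ← Nat.sq_sub_sq p 1, one_pow]⟩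
    obtain ⟨i, hi⟩ := FiniteField.isSquare_neg_one_iff.mpr (by rw [hcard, Nat.pow_mod, hp4]; decide)
    rw [← CharP.intCast_eq_zero_iff (GaloisField p 2) p]
    push_cast
    rw [sum_neg_one_pow_mul_choose_of_mod_four_eq_three hp4 (by rw [sq, ← hi]) hζ hm]
    simp only [hp4, true_and]
    split_ifs <;> ring
end

section
/- For any positive integers n, k, one has Im(G_k(n)) ≡ 0 (mod n), unless n ≡ 2 (mod 4) and k > 1 is odd, in which case Im(G_k(n)) ≡ n/2 (mod n). -/
/-!
Modulo `n`, `a + (n - b)i ≡ conj (a + bi)`, so in every row `a` of the square the imaginary parts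
of `(a + bi)^k` cancel in pairs, except for the middle column `b = m` when `n = 2m`. The middle
column lies in the order `ℤ + mℤ[i]`, on which `Im (z^k) mod 2m` is unchanged by `z ↦ z + 2`; hence
`Im G_k(2m) ≡ m (Im ((mi)^k) + Im ((1 + mi)^k)) mod 2m`. For even `m` this vanishes since
`m² ≡ 0 mod 2m`; for odd `m` it is `m` times the parity of `Im (i^k) + Im ((1 + i)^k)`, which is odd
exactly when `k > 1` is odd.
-/

/-- The Gaussian power sum `G_k(n) = ∑_{1 ≤ a, b ≤ n} (a + b·i)^k` in `ℤ[i]`. -/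
def Gsum (k n : ℕ) : GaussianInt :=
  ∑ a ∈ Finset.Icc 1 n, ∑ b ∈ Finset.Icc 1 n, (⟨(a : ℤ), (b : ℤ)⟩ : GaussianInt) ^ k

open Finset

local notation "ℤ[i]" => GaussianInt

section Sums

variable {M : Type*}

theorem Finset.sum_range_add_eq_sub_of_reflect [AddCommGroup M] (f : ℕ → M) {m j : ℕ}
    (hf : ∀ b < j, f (m + j - b) = -f b) :
    ∑ b ∈ range (m + 1 + j), f b = ∑ b ∈ range (m + 1), f b - ∑ b ∈ range j, f b := by
  rw [sum_range_add, ← sum_range_reflect (fun x => f (m + 1 + x)) j, sub_eq_add_neg,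
    ← sum_neg_distrib]
  refine congrArg _ (sum_congr rfl fun b hb => ?_)
  have hb := mem_range.1 hb
  rw [← hf b hb]
  congr 1
  omega

theorem Finset.sum_Icc_eq_sum_range_sub [AddCommGroup M] (f : ℕ → M) (n : ℕ) :
    ∑ b ∈ Icc 1 n, f b = ∑ b ∈ range (n + 1), f b - f 0 := by
  rw [sum_range_eq_add_Ico f (by omega : 0 < n + 1), Ico_add_one_right_eq_Icc,
    add_sub_cancel_left]

theorem Finset.sum_Icc_two_mul_of_reflect [AddCommGroup M] {f : ℕ → M} {m : ℕ}
    (hf : ∀ b ≤ 2 * m, f (2 * m - b) = -f b) :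
    ∑ b ∈ Icc 1 (2 * m), f b = f m - f 0 := by
  rw [sum_Icc_eq_sum_range_sub, show 2 * m + 1 = m + 1 + m by ring,
    sum_range_add_eq_sub_of_reflect f fun b hb => by rw [← two_mul]; exact hf b (by omega),
    sum_range_succ, add_sub_cancel_left]

theorem Finset.sum_Icc_two_mul_add_one_of_reflect [AddCommGroup M] {f : ℕ → M} {m : ℕ}
    (hf : ∀ b ≤ 2 * m + 1, f (2 * m + 1 - b) = -f b) :
    ∑ b ∈ Icc 1 (2 * m + 1), f b = -f 0 := by
  rw [sum_Icc_eq_sum_range_sub, show 2 * m + 1 + 1 = m + 1 + (m + 1) by ring,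
    sum_range_add_eq_sub_of_reflect f fun b hb => by
      rw [show m + (m + 1) = 2 * m + 1 by ring]; exact hf b (by omega),
    sub_self, zero_sub]

theorem Finset.sum_Icc_two_mul_of_periodic [AddCommMonoid M] {f : ℕ → M}
    (hf : Function.Periodic f 2) (m : ℕ) :
    ∑ a ∈ Icc 1 (2 * m), f a = m • (f 0 + f 1) := by
  induction m with
  | zero => simp
  | succ m ih =>
    have h1 : f (2 * m + 1) = f 1 := by simpa [add_comm, mul_comm] using hf.nat_mul m 1
    have h2 : f (2 * m + 1 + 1) = f 0 := by rw [← hf.nat_mul_eq (m + 1), Nat.cast_id]; ring_nf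
    rw [show 2 * (m + 1) = 2 * m + 1 + 1 by ring, sum_Icc_succ_top (by omega),
      sum_Icc_succ_top (by omega), ih, h1, h2, succ_nsmul, add_assoc, add_comm (f 1)]

end Sums

namespace GaussianInt

theorem im_sum {ι : Type*} (s : Finset ι) (f : ι → ℤ[i]) :
    (∑ x ∈ s, f x).im = ∑ x ∈ s, (f x).im :=
  map_sum (AddMonoidHom.mk' Zsqrtd.im Zsqrtd.im_add) f s

theorem im_pow_modEq_of_dvd_sub {N : ℤ} {z w : ℤ[i]} (h : (N : ℤ[i]) ∣ z - w) (k : ℕ) :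
    (z ^ k).im ≡ (w ^ k).im [ZMOD N] := by
  have := ((Zsqrtd.intCast_dvd N _).1 (h.trans (sub_dvd_pow_sub_pow z w k))).2
  exact (Int.modEq_iff_dvd.2 (by simpa using this)).symm

theorem im_pow_mk_sub_modEq_neg (a b n : ℤ) (k : ℕ) :
    ((⟨a, n - b⟩ : ℤ[i]) ^ k).im ≡ -((⟨a, b⟩ : ℤ[i]) ^ k).im [ZMOD n] := by
  have h : (n : ℤ[i]) ∣ ⟨a, n - b⟩ - star ⟨a, b⟩ := ⟨⟨0, 1⟩, by ext <;> simp⟩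
  have := im_pow_modEq_of_dvd_sub h k
  rwa [← star_pow, Zsqrtd.im_star] at this

/-- The order `ℤ[m i] = ℤ + m ℤ[i]`. -/
def imDvdSubring (m : ℤ) : Subring ℤ[i] where
  carrier := {z | m ∣ z.im}
  mul_mem' {z w} hz hw := by
    simpa only [Set.mem_ofPred_eq, Zsqrtd.im_mul] using dvd_add (hw.mul_left _) (hz.mul_right _)
  one_mem' := by simp
  add_mem' hz hw := by simpa using dvd_add hz hw
  zero_mem' := by simp
  neg_mem' hz := by simpa using hz

@[simp]
theorem mem_imDvdSubring {m : ℤ} {z : ℤ[i]} : z ∈ imDvdSubring m ↔ m ∣ z.im := Iff.rfl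

theorem dvd_im_pow {m : ℤ} {w : ℤ[i]} (hw : m ∣ w.im) (k : ℕ) : m ∣ (w ^ k).im :=
  pow_mem (mem_imDvdSubring.2 hw) k

theorem im_pow_intCast_add_modEq {m : ℤ} {w : ℤ[i]} (hw : m ∣ w.im) (c : ℤ) (k : ℕ) :
    (((c : ℤ[i]) + w) ^ k).im ≡ (w ^ k).im [ZMOD c * m] := by
  have hw' : w ∈ imDvdSubring m := hw
  have hcw : (c : ℤ[i]) + w ∈ imDvdSubring m := by simpa using hw
  obtain ⟨t, ht⟩ : m ∣ (∑ i ∈ range k, ((c : ℤ[i]) + w) ^ i * w ^ (k - 1 - i)).im :=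
    Subring.sum_mem _ fun i _ =>
      Subring.mul_mem _ (Subring.pow_mem _ hcw i) (Subring.pow_mem _ hw' _)
  rw [← geom_sum₂_mul_add, Zsqrtd.im_add, mul_comm _ (c : ℤ[i]), Zsqrtd.im_smul, ht,
    ← mul_assoc, add_comm]
  exact Int.modEq_add_fac_self

theorem im_pow_mk_zero (a : ℤ) (k : ℕ) : ((⟨a, 0⟩ : ℤ[i]) ^ k).im = 0 := by
  rw [show (⟨a, 0⟩ : ℤ[i]) = (a : ℤ[i]) by ext <;> simp, ← Int.cast_pow, Zsqrtd.im_intCast]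

theorem intCast_im_pow_mk_sub (a : ℤ) {n b : ℕ} (hb : b ≤ n) (k : ℕ) :
    ((((⟨a, ((n - b : ℕ) : ℤ)⟩ : ℤ[i]) ^ k).im : ℤ) : ZMod n) =
      -(((⟨a, b⟩ : ℤ[i]) ^ k).im : ℤ) := by
  rw [← Int.cast_neg, ZMod.intCast_eq_intCast_iff, Nat.cast_sub hb]
  exact im_pow_mk_sub_modEq_neg a b n k

theorem im_I_pow_modEq (k : ℕ) :
    ((⟨0, 1⟩ : ℤ[i]) ^ k).im ≡ if Odd k then 1 else 0 [ZMOD 2] := by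
  have hI : (⟨0, 1⟩ : ℤ[i]) ^ 2 = ((-1 : ℤ) : ℤ[i]) := by ext <;> simp [sq]
  obtain ⟨q, rfl | rfl⟩ := Nat.even_or_odd' k
  · rw [pow_mul, hI, ← Int.cast_pow, Zsqrtd.im_intCast,
      if_neg (Nat.not_odd_iff_even.2 (even_two_mul q))]
  · rw [pow_succ, pow_mul, hI, ← Int.cast_pow, Zsqrtd.im_smul, if_pos (odd_two_mul_add_one q)]
    simpa using (show (-1 : ℤ) ≡ 1 [ZMOD 2] by decide).pow q

theorem im_one_add_I_pow_modEq (k : ℕ) :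
    ((⟨1, 1⟩ : ℤ[i]) ^ k).im ≡ if k = 1 then 1 else 0 [ZMOD 2] := by
  match k with
  | 0 => rfl
  | 1 => rfl
  | k + 2 =>
    have h : (⟨1, 1⟩ : ℤ[i]) ^ (k + 2) = ((2 : ℤ) : ℤ[i]) * (⟨0, 1⟩ * ⟨1, 1⟩ ^ k) := by
      have h2 : (⟨1, 1⟩ : ℤ[i]) ^ 2 = ((2 : ℤ) : ℤ[i]) * ⟨0, 1⟩ := by ext <;> simp [sq]
      rw [pow_add, h2]
      ring
    rw [h, Zsqrtd.im_smul, if_neg (by omega)]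
    exact Int.modEq_zero_iff_dvd.2 (dvd_mul_right 2 _)

theorem im_I_pow_add_im_one_add_I_pow_modEq (k : ℕ) :
    ((⟨0, 1⟩ : ℤ[i]) ^ k).im + ((⟨1, 1⟩ : ℤ[i]) ^ k).im ≡
      if Odd k ∧ 1 < k then 1 else 0 [ZMOD 2] := by
  refine ((im_I_pow_modEq k).add (im_one_add_I_pow_modEq k)).trans ?_
  by_cases hk : k = 1
  · subst hk; decide
  · have : Odd k → 1 < k := fun ho => by obtain ⟨j, rfl⟩ := ho; omega
    by_cases ho : Odd k <;> simp [hk, ho, this]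

theorem im_pow_mk_modEq_of_odd (a : ℤ) {m : ℤ} (hm : Odd m) (k : ℕ) :
    ((⟨a, m⟩ : ℤ[i]) ^ k).im ≡ ((⟨a, 1⟩ : ℤ[i]) ^ k).im [ZMOD 2] := by
  obtain ⟨t, rfl⟩ := hm
  exact im_pow_modEq_of_dvd_sub ⟨⟨0, t⟩, by ext <;> simp⟩ k

end GaussianInt

open GaussianInt

theorem im_Gsum_two_mul_modEq (k m : ℕ) :
    (Gsum k (2 * m)).im ≡ m * (((⟨0, m⟩ : ℤ[i]) ^ k).im + ((⟨1, m⟩ : ℤ[i]) ^ k).im)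
      [ZMOD (2 * m : ℕ)] := by
  let F (a b : ℕ) : ZMod (2 * m) := (((⟨a, b⟩ : ℤ[i]) ^ k).im : ℤ)
  have hrow (a : ℕ) : ∑ b ∈ Icc 1 (2 * m), F a b = F a m := by
    rw [sum_Icc_two_mul_of_reflect fun b hb => intCast_im_pow_mk_sub a hb k]
    simp [F, im_pow_mk_zero]
  have hperiodic : Function.Periodic (fun a => F a m) 2 := fun a => by
    have hshift : (⟨((a + 2 : ℕ) : ℤ), m⟩ : ℤ[i]) = ((2 : ℤ) : ℤ[i]) + ⟨a, m⟩ := by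
      ext <;> simp [add_comm]
    simp only [F, hshift, ZMod.intCast_eq_intCast_iff, Nat.cast_mul, Nat.cast_ofNat]
    exact im_pow_intCast_add_modEq (m := m) dvd_rfl 2 k
  rw [← ZMod.intCast_eq_intCast_iff, Gsum, im_sum]
  simp only [im_sum, Int.cast_sum]
  rw [sum_congr rfl fun a _ => hrow a, sum_Icc_two_mul_of_periodic hperiodic]
  simp [F, mul_add]

theorem im_Gsum_two_mul_add_one_modEq (k m : ℕ) :
    (Gsum k (2 * m + 1)).im ≡ 0 [ZMOD (2 * m + 1 : ℕ)] := by
  rw [← ZMod.intCast_eq_intCast_iff, Gsum, im_sum]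
  simp only [im_sum, Int.cast_sum]
  refine (sum_eq_zero fun a _ => ?_).trans Int.cast_zero.symm
  rw [sum_Icc_two_mul_add_one_of_reflect fun b hb => intCast_im_pow_mk_sub a hb k]
  simp [im_pow_mk_zero]

theorem im_Gsum_modEq (k n : ℕ) :
    (Gsum k n).im ≡ if n % 4 = 2 ∧ Odd k ∧ 1 < k then ((n / 2 : ℕ) : ℤ) else 0 [ZMOD n] := by
  obtain ⟨m, rfl | rfl⟩ := Nat.even_or_odd' n
  · refine (im_Gsum_two_mul_modEq k m).trans ?_
    rcases Nat.even_or_odd m with ⟨t, rfl⟩ | hm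
    · rw [if_neg (by omega)]
      -- both imaginary parts are multiples of `m = t + t`, and `m² ≡ 0 [ZMOD 2 * m]`
      obtain ⟨s, hs⟩ : ((t + t : ℕ) : ℤ) ∣
          ((⟨0, (t + t : ℕ)⟩ : ℤ[i]) ^ k).im + ((⟨1, (t + t : ℕ)⟩ : ℤ[i]) ^ k).im :=
        dvd_add (dvd_im_pow dvd_rfl k) (dvd_im_pow dvd_rfl k)
      exact Int.modEq_zero_iff_dvd.2 ⟨t * s, by rw [hs]; push_cast; ring⟩
    · have hmod : ((⟨0, m⟩ : ℤ[i]) ^ k).im + ((⟨1, m⟩ : ℤ[i]) ^ k).im ≡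
          if Odd k ∧ 1 < k then 1 else 0 [ZMOD 2] :=
        ((im_pow_mk_modEq_of_odd 0 hm.natCast k).add (im_pow_mk_modEq_of_odd 1 hm.natCast k)).trans
          (im_I_pow_add_im_one_add_I_pow_modEq k)
      have h4 : 2 * m % 4 = 2 := by obtain ⟨t, rfl⟩ := hm; omega
      simp only [h4, true_and, Nat.mul_div_cancel_left m two_pos]
      have := hmod.mul_left' (c := m)
      rwa [mul_ite, mul_one, mul_zero, mul_comm, ← Nat.cast_ofNat, ← Nat.cast_mul] at this
  · rw [if_neg (by omega)]
    exact im_Gsum_two_mul_add_one_modEq k m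

theorem im_Gsum_mod_general (k n : ℕ) :
    (¬(n % 4 = 2 ∧ Odd k ∧ 1 < k) → (n : ℤ) ∣ (Gsum k n).im) ∧
    (n % 4 = 2 ∧ Odd k ∧ 1 < k → (n : ℤ) ∣ (Gsum k n).im - ((n / 2 : ℕ) : ℤ)) := by
  have h := im_Gsum_modEq k n
  refine ⟨fun hc => ?_, fun hc => ?_⟩
  · rw [if_neg hc] at h
    exact Int.modEq_zero_iff_dvd.1 h
  · rw [if_pos hc] at h
    exact h.symm.dvd

theorem im_Gsum_mod (k n : ℕ) (hk : 0 < k) (hn : 0 < n) :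
    (¬(n % 4 = 2 ∧ Odd k ∧ 1 < k) → (n : ℤ) ∣ (Gsum k n).im) ∧
    (n % 4 = 2 ∧ Odd k ∧ 1 < k → (n : ℤ) ∣ (Gsum k n).im - ((n / 2 : ℕ) : ℤ)) :=
  im_Gsum_mod_general k n
end

section
/- If n ≡ 2 (mod 4) and k > 1 is odd, then Re(G_k(n)) ≡ n/2 (mod n). -/
open Finset

namespace ReGsumAux

/-- `re` as an additive homomorphism. -/
def reHom : GaussianInt →+ ℤ :=
  { toFun := Zsqrtd.re, map_zero' := rfl, map_add' := fun _ _ => rfl }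

lemma pow_dvd_cong (c : ℤ) (k : ℕ) {z w : GaussianInt} (h : (c : GaussianInt) ∣ z - w) :
    (c : GaussianInt) ∣ z ^ k - w ^ k :=
  h.trans (sub_dvd_pow_sub_pow z w k)

lemma re_dvd {c : ℤ} {z : GaussianInt} (h : (c : GaussianInt) ∣ z) : c ∣ z.re :=
  ((Zsqrtd.intCast_dvd _ _).1 h).1

lemma key_cong (k : ℕ) (a b a' b' : ℤ) (h1 : (2:ℤ) ∣ a - a') (h2 : (2:ℤ) ∣ b - b') :
    (2:ℤ) ∣ ((⟨a,b⟩ : GaussianInt) ^ k).re - ((⟨a',b'⟩ : GaussianInt) ^ k).re := by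
  have hz : ((2:ℤ) : GaussianInt) ∣ ((⟨a,b⟩ : GaussianInt) - ⟨a',b'⟩) := by
    refine (Zsqrtd.intCast_dvd _ _).2 ⟨?_, ?_⟩
    · simpa [Zsqrtd.re_sub] using h1
    · simpa [Zsqrtd.im_sub] using h2
  simpa [Zsqrtd.re_sub] using re_dvd (pow_dvd_cong 2 k hz)

lemma aux_shift (f : ℕ → ℤ) (H : ∀ j, (2:ℤ) ∣ f (j+2) - f j) :
    ∀ j r, (2:ℤ) ∣ f (2*j + r) - f r := by
  intro j
  induction j with
  | zero => simp
  | succ j ih =>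
    intro r
    have h1 := H (2*j + r)
    have h2 := ih r
    have e : 2*(j+1) + r = (2*j + r) + 2 := by ring
    rw [e]
    omega

lemma per2 (f : ℕ → ℤ) (H : ∀ j, (2:ℤ) ∣ f (j+2) - f j) (m : ℕ) :
    (2:ℤ) ∣ (∑ a ∈ Icc 1 (2*m), f a) - m * (f 1 + f 2) := by
  induction m with
  | zero => simp
  | succ m ih =>
    have e1 : 2 * (m+1) = (2*m + 1) + 1 := by ring
    rw [e1, Finset.sum_Icc_succ_top (by omega), Finset.sum_Icc_succ_top (by omega)]
    have h1 := aux_shift f H m 1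
    have h2 := aux_shift f H m 2
    have key : (∑ a ∈ Icc 1 (2*m), f a) + f (2*m+1) + f (2*m+1+1) - (↑(m+1)) * (f 1 + f 2)
        = ((∑ a ∈ Icc 1 (2*m), f a) - ↑m * (f 1 + f 2))
          + ((f (2*m+1) - f 1) + (f (2*m+2) - f 2)) := by
      push_cast
      have : 2*m+1+1 = 2*m+2 := by ring
      rw [this]; ring
    rw [key]
    exact dvd_add ih (dvd_add h1 h2)

end ReGsumAux

theorem re_Gsum_mod_two_mod_four (k n : ℕ) (hn4 : n % 4 = 2) (hk : 1 < k) (hkodd : Odd k) :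
    (n : ℤ) ∣ (Gsum k n).re - ((n / 2 : ℕ) : ℤ) := by
  classical
  obtain ⟨j, hj⟩ := hkodd
  set m := n / 2 with hm
  have hnm : n = 2 * m := by omega
  have hmodd : m % 2 = 1 := by omega
  set S := Gsum k n with hS
  set I : GaussianInt := ⟨0, 1⟩ with hI
  have hII : I * I = -1 := by rw [Zsqrtd.ext_iff]; simp [hI]
  have hrot : ∀ a b : ℤ, I * (⟨a, b⟩ : GaussianInt) = ⟨-b, a⟩ := by
    intro a b; rw [Zsqrtd.ext_iff]; simp [hI]
  set σ : ℕ → ℕ := fun x => if x = n then n else n - x with hσ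
  have hσmem : ∀ x ∈ Icc 1 n, σ x ∈ Icc 1 n := by
    intro x hx; simp only [mem_Icc, hσ] at *
    split <;> omega
  have hσinv : ∀ x ∈ Icc 1 n, σ (σ x) = x := by
    intro x hx; simp only [mem_Icc] at hx; simp only [hσ]
    rcases eq_or_ne x n with rfl | h
    · simp
    · rw [if_neg h, if_neg (by omega)]; omega
  -- Step A : `m ∣ S.re`
  have hreidx : (∑ a ∈ Icc 1 n, ∑ b ∈ Icc 1 n, ((⟨(σ a : ℤ), (b : ℤ)⟩ : GaussianInt)) ^ k)
      = S := by
    rw [hS]; unfold Gsum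
    exact Finset.sum_nbij' σ σ hσmem hσmem hσinv hσinv (fun a _ => rfl)
  have hT1 : (∑ a ∈ Icc 1 n, ∑ b ∈ Icc 1 n, ((⟨-(b:ℤ), (a:ℤ)⟩ : GaussianInt)) ^ k)
      = I ^ k * S := by
    rw [hS]; unfold Gsum
    rw [Finset.mul_sum]
    refine Finset.sum_congr rfl fun a _ => ?_
    rw [Finset.mul_sum]
    refine Finset.sum_congr rfl fun b _ => ?_
    rw [← mul_pow, hrot]
  have hswap : (∑ a ∈ Icc 1 n, ∑ b ∈ Icc 1 n, ((⟨-(b:ℤ), (a:ℤ)⟩ : GaussianInt)) ^ k)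
      = ∑ x ∈ Icc 1 n, ∑ y ∈ Icc 1 n, ((⟨-(x:ℤ), (y:ℤ)⟩ : GaussianInt)) ^ k :=
    Finset.sum_comm
  have hdvd1 : (n : GaussianInt) ∣ I ^ k * S - S := by
    rw [← hT1, hswap, ← hreidx, ← Finset.sum_sub_distrib]
    refine Finset.dvd_sum fun x hx => ?_
    rw [← Finset.sum_sub_distrib]
    refine Finset.dvd_sum fun y hy => ?_
    have hcast : ((n : ℤ) : GaussianInt) = (n : GaussianInt) := by push_cast; rfl
    rw [← hcast]
    refine ReGsumAux.pow_dvd_cong _ k ?_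
    refine (Zsqrtd.intCast_dvd _ _).2 ⟨?_, ?_⟩
    · show (n : ℤ) ∣ (-(x:ℤ) - (σ x : ℤ))
      simp only [hσ]
      simp only [mem_Icc] at hx
      rcases eq_or_ne x n with rfl | h
      · rw [if_pos rfl]; exact ⟨-2, by push_cast; ring⟩
      · rw [if_neg h]
        refine ⟨-1, ?_⟩
        have hc : ((n - x : ℕ) : ℤ) = (n:ℤ) - x := by omega
        rw [hc]; ring
    · show (n : ℤ) ∣ ((y:ℤ) - (y:ℤ))
      simp
  have hIk2 : I ^ k * I ^ k = -1 := by
    rw [← mul_pow, hII, hj]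
    exact Odd.neg_one_pow ⟨j, rfl⟩
  have h2S : (n : GaussianInt) ∣ 2 * S := by
    have h := hdvd1.mul_right (I ^ k + 1)
    have e : (I ^ k * S - S) * (I ^ k + 1) = (I ^ k * I ^ k) * S - S := by ring
    rw [e, hIk2] at h
    have e2 : (-1 : GaussianInt) * S - S = -(2 * S) := by ring
    rw [e2] at h
    exact dvd_neg.1 h
  have hmre : (m : ℤ) ∣ S.re := by
    have h2S' : ((n : ℤ) : GaussianInt) ∣ 2 * S := by
      rw [show ((n : ℤ) : GaussianInt) = (n : GaussianInt) by push_cast; rfl]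
      exact h2S
    have h1 : (n : ℤ) ∣ (2 * S).re := ReGsumAux.re_dvd h2S'
    have h2 : (2 * S).re = 2 * S.re := by
      rw [two_mul, Zsqrtd.re_add, two_mul]
    rw [h2, hnm] at h1
    obtain ⟨t, ht⟩ := h1
    refine ⟨t, ?_⟩
    push_cast at ht ⊢
    linarith
  -- Step B : `S.re` is odd
  set F : ℕ → ℕ → ℤ := fun a b => (((⟨(a:ℤ), (b:ℤ)⟩ : GaussianInt)) ^ k).re with hF
  set g : ℕ → ℤ := fun a => ∑ b ∈ Icc 1 n, F a b with hg
  have hSre : S.re = ∑ a ∈ Icc 1 n, g a := by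
    rw [hS]
    show ReGsumAux.reHom (Gsum k n) = _
    unfold Gsum
    rw [map_sum]
    refine Finset.sum_congr rfl fun a _ => ?_
    show ReGsumAux.reHom _ = _
    rw [map_sum]
    rfl
  have hg_per : ∀ jj, (2:ℤ) ∣ g (jj+2) - g jj := by
    intro jj
    show (2:ℤ) ∣ (∑ b ∈ Icc 1 n, F (jj+2) b) - ∑ b ∈ Icc 1 n, F jj b
    rw [← Finset.sum_sub_distrib]
    exact Finset.dvd_sum fun b _ =>
      ReGsumAux.key_cong k _ _ _ _ ⟨1, by push_cast; ring⟩ ⟨0, by ring⟩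
  have hA : (2:ℤ) ∣ S.re - m * (g 1 + g 2) := by
    have h := ReGsumAux.per2 g hg_per m
    rw [← hnm, ← hSre] at h
    exact h
  have hgb : ∀ a, (2:ℤ) ∣ g a - m * (F a 1 + F a 2) := by
    intro a
    have h := ReGsumAux.per2 (fun b => F a b)
      (fun jj => ReGsumAux.key_cong k _ _ _ _ ⟨0, by ring⟩ ⟨1, by push_cast; ring⟩) m
    rw [← hnm] at h
    exact h
  -- the four residue values
  have c11 : (2:ℤ) ∣ F 1 1 := by
    have hz2 : ((⟨(1:ℤ),(1:ℤ)⟩ : GaussianInt)) ^ 2 = 2 * ⟨0,1⟩ := by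
      rw [Zsqrtd.ext_iff]; simp [pow_two]
    have hdvd : ((2:ℤ) : GaussianInt) ∣ (⟨(1:ℤ),(1:ℤ)⟩ : GaussianInt) ^ k := by
      rw [hj, pow_add, pow_mul, pow_one, hz2]
      rw [show ((2:ℤ) : GaussianInt) = 2 by push_cast; rfl]
      exact Dvd.dvd.mul_right (dvd_pow (dvd_mul_right 2 _) (by omega)) _
    have := ReGsumAux.re_dvd hdvd
    show (2:ℤ) ∣ (((⟨((1:ℕ):ℤ), ((1:ℕ):ℤ)⟩ : GaussianInt)) ^ k).re
    norm_num
    convert this using 3 <;> norm_num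
  have c12 : (2:ℤ) ∣ F 1 2 - 1 := by
    have h := ReGsumAux.key_cong k 1 2 1 0 ⟨0, by ring⟩ ⟨1, by ring⟩
    have e1 : ((⟨(1:ℤ),(0:ℤ)⟩ : GaussianInt)) ^ k = 1 := by
      rw [show ((⟨(1:ℤ),(0:ℤ)⟩ : GaussianInt)) = 1 from rfl, one_pow]
    rw [e1] at h
    have e2 : F 1 2 = ((⟨(1:ℤ),(2:ℤ)⟩ : GaussianInt) ^ k).re := by
      show (((⟨((1:ℕ):ℤ), ((2:ℕ):ℤ)⟩ : GaussianInt)) ^ k).re = _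
      norm_num
    rw [e2]
    simpa using h
  have c21 : (2:ℤ) ∣ F 2 1 := by
    have h := ReGsumAux.key_cong k 2 1 0 1 ⟨1, by ring⟩ ⟨0, by ring⟩
    have hIk : ((⟨(0:ℤ),(1:ℤ)⟩ : GaussianInt) ^ k).re = 0 := by
      rw [← hI, hj, pow_add, pow_mul, pow_one,
        show I ^ 2 = -1 by rw [pow_two, hII]]
      rcases Nat.even_or_odd j with hje | hjo
      · rw [hje.neg_one_pow]; simp [hI]
      · rw [hjo.neg_one_pow]; simp [hI]
    rw [hIk] at h
    have e2 : F 2 1 = ((⟨(2:ℤ),(1:ℤ)⟩ : GaussianInt) ^ k).re := by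
      show (((⟨((2:ℕ):ℤ), ((1:ℕ):ℤ)⟩ : GaussianInt)) ^ k).re = _
      norm_num
    rw [e2]
    simpa using h
  have c22 : (2:ℤ) ∣ F 2 2 := by
    have hdvd : ((2:ℤ) : GaussianInt) ∣ (⟨(2:ℤ),(2:ℤ)⟩ : GaussianInt) :=
      (Zsqrtd.intCast_dvd _ _).2 ⟨⟨1, by norm_num⟩, ⟨1, by norm_num⟩⟩
    have := ReGsumAux.re_dvd (dvd_pow hdvd (by omega : k ≠ 0))
    have e2 : F 2 2 = ((⟨(2:ℤ),(2:ℤ)⟩ : GaussianInt) ^ k).re := by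
      show (((⟨((2:ℕ):ℤ), ((2:ℕ):ℤ)⟩ : GaussianInt)) ^ k).re = _
      norm_num
    rw [e2]
    exact this
  have hsum_odd : Odd (F 1 1 + F 1 2 + F 2 1 + F 2 2) := by
    obtain ⟨u1, e1⟩ := c11
    obtain ⟨u2, e2⟩ := c12
    obtain ⟨u3, e3⟩ := c21
    obtain ⟨u4, e4⟩ := c22
    exact ⟨u1 + u2 + u3 + u4, by linarith⟩
  have hm_odd : Odd ((m:ℤ)) := by
    rw [Int.odd_iff]; omega
  have hcomb : (2:ℤ) ∣ S.re - ((m:ℤ) * m) * (F 1 1 + F 1 2 + F 2 1 + F 2 2) := by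
    have h2 := hgb 1
    have h3 := hgb 2
    have e : S.re - ((m:ℤ) * m) * (F 1 1 + F 1 2 + F 2 1 + F 2 2)
        = (S.re - (m:ℤ) * (g 1 + g 2))
          + (m:ℤ) * ((g 1 - m * (F 1 1 + F 1 2)) + (g 2 - m * (F 2 1 + F 2 2))) := by ring
    rw [e]
    exact dvd_add hA (Dvd.dvd.mul_left (dvd_add h2 h3) _)
  have hodd : Odd S.re := by
    have hprod : Odd (((m:ℤ) * m) * (F 1 1 + F 1 2 + F 2 1 + F 2 2)) :=
      (hm_odd.mul hm_odd).mul hsum_odd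
    obtain ⟨c, hc⟩ := hcomb
    obtain ⟨d, hd⟩ := hprod
    exact ⟨c + d, by linarith⟩
  -- combine
  obtain ⟨t, ht⟩ := hmre
  have htodd : Odd t := (Int.odd_mul.mp (ht ▸ hodd)).2
  obtain ⟨s, hs⟩ := htodd
  refine ⟨s, ?_⟩
  rw [ht, hs]
  push_cast [hnm]
  ring
end

section
/- If k > 1 is odd and n ≢ 2 (mod 4), or if k = 1, then Re(G_k(n)) ≡ 0 (mod n). -/
/-!
Modulo `n`, `G_k(n)` is the power sum of `a + b·i` over the complete residue system
`0 ≤ a, b < n`. For odd `k` the substitution `a ↦ -a` turns `conj G_k(n)` into `-G_k(n)`,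
so `n ∣ 2 Re G_k(n)`, which takes care of the odd part of `n`. If `2^e ∥ n` with `e ≥ 2`,
periodicity gives `G_k(n) ≡ m² G_k(2^e) (mod 2^e)` with `n = 2^e m`, and splitting `[0, 2N)²`
into four translates of `[0, N)²` gives
`G_{k+1}(2N) ≡ 4 G_{k+1}(N) + 2(k+1)N(1+i) G_k(N) (mod N²)`, whence `2^e ∣ G_k(2^e)` by
induction on `e`. For `k = 1`, `G_1(n) = n(1+i) ∑ a` outright.
-/

open Finset Function

section PeriodicSums

variable {M : Type*} [AddCommMonoid M] {f : ℕ → M} {q : ℕ}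

theorem Function.Periodic.sum_range_mul (hf : Periodic f q) (m : ℕ) :
    ∑ a ∈ range (m * q), f a = m • ∑ a ∈ range q, f a := by
  induction m with
  | zero => simp
  | succ m ih =>
    rw [add_mul, one_mul, sum_range_add, ih, succ_nsmul]
    congr 1
    refine sum_congr rfl fun a _ => ?_
    simpa [add_comm] using hf.nat_mul m a

theorem Function.Periodic.sum_range_add_one (hf : Periodic f q) :
    ∑ a ∈ range q, f (a + 1) = ∑ a ∈ range q, f a := by
  cases q with
  | zero => rfl
  | succ q => rw [sum_range_succ, sum_range_succ' f, ← zero_add (q + 1), hf]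

theorem Function.Periodic.sum_Icc_one (hf : Periodic f q) :
    ∑ a ∈ Icc 1 q, f a = ∑ a ∈ range q, f a := by
  rw [← hf.sum_range_add_one, range_eq_Ico, sum_Ico_add' f 0 q 1]
  rfl

theorem Function.Periodic.sum_range_sub (hf : Periodic f q) :
    ∑ a ∈ range q, f (q - a) = ∑ a ∈ range q, f a := by
  rw [← hf.sum_range_add_one, ← sum_range_reflect]
  refine sum_congr rfl fun a ha => ?_
  have := mem_range.1 ha
  congr 1
  omega

end PeriodicSums

section GridPowerSum

variable {R : Type*} [CommRing R]

theorem periodic_comp_natCast {M : Type*} {q : ℕ} (hq : (q : R) = 0) (g : R → M) :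
    Periodic (fun a : ℕ => g a) q :=
  fun a => by simp [hq]

def gridPowerSum (J : R) (k n : ℕ) : R :=
  ∑ a ∈ range n, ∑ b ∈ range n, ((a : R) + b * J) ^ k

theorem gridPowerSum_mul_of_natCast_eq_zero {q : ℕ} (hq : (q : R) = 0) (J : R) (k m : ℕ) :
    gridPowerSum J k (m * q) = m ^ 2 * gridPowerSum J k q := by
  have inner (a : ℕ) :=
    (periodic_comp_natCast hq fun y => ((a : R) + y * J) ^ k).sum_range_mul m
  simp only [gridPowerSum, inner]
  rw [← smul_sum,
    (periodic_comp_natCast hq fun x => ∑ b ∈ range q, (x + b * J) ^ k).sum_range_mul m,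
    smul_smul, nsmul_eq_mul, Nat.cast_mul, sq]

theorem gridPowerSum_neg_of_odd {n k : ℕ} (hn : (n : R) = 0) (hk : Odd k) (J : R) :
    gridPowerSum (-J) k n = -gridPowerSum J k n := by
  rw [gridPowerSum,
    ← (periodic_comp_natCast hn fun x => ∑ b ∈ range n, (x + b * -J) ^ k).sum_range_sub,
    gridPowerSum, ← sum_neg_distrib]
  refine sum_congr rfl fun a ha => ?_
  rw [Nat.cast_sub (mem_range.1 ha).le, hn, ← sum_neg_distrib]
  refine sum_congr rfl fun b _ => ?_
  rw [← hk.neg_pow]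
  ring

theorem sq_dvd_gridPowerSum_two_mul (J : R) (k N : ℕ) :
    (N : R) ^ 2 ∣ gridPowerSum J (k + 1) (2 * N) - 4 * gridPowerSum J (k + 1) N
      - 2 * (k + 1) * N * (1 + J) * gridPowerSum J k N := by
  set D : R → R → R := fun x c => (x + c) ^ (k + 1) - x ^ k * c * (k + 1 : ℕ) - x ^ (k + 1)
  have hD (x u : R) : (N : R) ^ 2 ∣ D x (N * u) :=
    (Dvd.intro _ (mul_pow (N : R) u 2).symm).trans (sq_dvd_add_pow_sub_sub _ x (k + 1))
  have hsplit : gridPowerSum J (k + 1) (2 * N) - 4 * gridPowerSum J (k + 1) N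
      - 2 * (k + 1) * N * (1 + J) * gridPowerSum J k N
      = ∑ a ∈ range N, ∑ b ∈ range N,
          (D (a + b * J) (N * 1) + D (a + b * J) (N * J) + D (a + b * J) (N * (1 + J))) := by
    simp only [gridPowerSum, D, two_mul, sum_range_add, ← sum_add_distrib, mul_sum,
      ← sum_sub_distrib]
    refine sum_congr rfl fun a _ => sum_congr rfl fun b _ => ?_
    push_cast
    ring
  rw [hsplit]
  exact dvd_sum fun a _ => dvd_sum fun b _ => ((hD _ _).add (hD _ _)).add (hD _ _)

theorem two_pow_dvd_gridPowerSum (J : R) (k : ℕ) {e : ℕ} (he : 2 ≤ e) :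
    (2 : R) ^ e ∣ gridPowerSum J k (2 ^ e) := by
  cases k with
  | zero => simp [gridPowerSum]
  | succ k =>
    have doubling {d : R} {N : ℕ} (hN : d ∣ (N : R) ^ 2)
        (hG : d ∣ 4 * gridPowerSum J (k + 1) N) (h2N : d ∣ 2 * N) :
        d ∣ gridPowerSum J (k + 1) (2 * N) := by
      have := ((hN.trans (sq_dvd_gridPowerSum_two_mul J k N)).add hG).add
        (h2N.mul_right ((k + 1) * (1 + J) * gridPowerSum J k N))
      convert this using 1
      ring
    induction e, he using Nat.le_induction with
    | base =>
      rw [show (2 : R) ^ 2 = 4 by norm_num]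
      exact doubling (by norm_num) (dvd_mul_right _ _) (by norm_num)
    | succ e he ih =>
      rw [pow_succ', pow_succ']
      refine doubling ?_ (mul_dvd_mul ⟨2, by norm_num⟩ ih) (by push_cast; rfl)
      push_cast
      rw [← pow_succ', ← pow_mul]
      exact pow_dvd_pow 2 (by omega)

end GridPowerSum

theorem map_Gsum_eq_gridPowerSum {R : Type*} [CommRing R] (φ : GaussianInt →+* R) {n : ℕ}
    (hn : (n : R) = 0) (k : ℕ) : φ (Gsum k n) = gridPowerSum (φ Zsqrtd.sqrtd) k n := by
  have hpoint (a b : ℕ) : φ ⟨a, b⟩ = (a : R) + b * φ Zsqrtd.sqrtd := by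
    rw [Zsqrtd.decompose]
    simp [mul_comm]
  simp only [Gsum, map_sum, map_pow, hpoint]
  rw [(periodic_comp_natCast hn fun x => ∑ b ∈ Icc 1 n, (x + b * φ Zsqrtd.sqrtd) ^ k).sum_Icc_one]
  exact sum_congr rfl fun a _ =>
    (periodic_comp_natCast hn fun y => ((a : R) + y * φ Zsqrtd.sqrtd) ^ k).sum_Icc_one

theorem natCast_dvd_Gsum_add_star {k : ℕ} (hk : Odd k) (n : ℕ) :
    (n : GaussianInt) ∣ Gsum k n + star (Gsum k n) := by
  let π := Ideal.Quotient.mk (Ideal.span {(n : GaussianInt)})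
  have hn : (n : GaussianInt ⧸ Ideal.span {(n : GaussianInt)}) = 0 := by
    rw [← map_natCast π, Ideal.Quotient.eq_zero_iff_dvd]
  have hstar : starRingEnd GaussianInt Zsqrtd.sqrtd = -Zsqrtd.sqrtd := by
    ext <;> simp [starRingEnd_apply]
  rw [← Ideal.Quotient.eq_zero_iff_dvd, map_add, ← starRingEnd_apply, ← RingHom.comp_apply,
    map_Gsum_eq_gridPowerSum _ hn, map_Gsum_eq_gridPowerSum _ hn, RingHom.comp_apply, hstar,
    map_neg, gridPowerSum_neg_of_odd hn hk, add_neg_cancel]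

theorem natCast_dvd_two_mul_re_Gsum {k : ℕ} (hk : Odd k) (n : ℕ) :
    (n : ℤ) ∣ 2 * (Gsum k n).re := by
  have h := natCast_dvd_Gsum_add_star hk n
  rw [← Int.cast_natCast, Zsqrtd.intCast_dvd] at h
  simpa [two_mul] using h.1

theorem two_pow_dvd_Gsum (k : ℕ) {e n : ℕ} (he : 2 ≤ e) (hn : 2 ^ e ∣ n) :
    (2 : GaussianInt) ^ e ∣ Gsum k n := by
  obtain ⟨m, rfl⟩ := hn
  let π := Ideal.Quotient.mk (Ideal.span {(2 : GaussianInt) ^ e})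
  have h2e : (2 : GaussianInt ⧸ Ideal.span {(2 : GaussianInt) ^ e}) ^ e = 0 := by
    rw [← map_ofNat π, ← map_pow, Ideal.Quotient.eq_zero_iff_dvd]
  have h2e' : ((2 ^ e : ℕ) : GaussianInt ⧸ Ideal.span {(2 : GaussianInt) ^ e}) = 0 := by
    rw [Nat.cast_pow, Nat.cast_ofNat, h2e]
  have hgrid := two_pow_dvd_gridPowerSum (π Zsqrtd.sqrtd) k he
  rw [h2e, zero_dvd_iff] at hgrid
  rw [← Ideal.Quotient.eq_zero_iff_dvd,
    map_Gsum_eq_gridPowerSum _ (by rw [Nat.cast_mul, h2e', zero_mul]), mul_comm,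
    gridPowerSum_mul_of_natCast_eq_zero h2e', hgrid, mul_zero]

theorem natCast_dvd_Gsum_one (n : ℕ) : (n : GaussianInt) ∣ Gsum 1 n := by
  have : Gsum 1 n = (n : GaussianInt) * (1 + Zsqrtd.sqrtd) * ∑ a ∈ Icc 1 n, (a : GaussianInt) := by
    simp only [Gsum, Zsqrtd.decompose, Int.cast_natCast, pow_one, sum_add_distrib, sum_const,
      Nat.card_Icc, add_tsub_cancel_right, nsmul_eq_mul, ← mul_sum]
    ring
  exact this ▸ dvd_mul_of_dvd_left (dvd_mul_right _ _) _

theorem re_Gsum_odd_k (k n : ℕ) (hn : 0 < n)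
    (h : (Odd k ∧ 1 < k ∧ n % 4 ≠ 2) ∨ k = 1) :
    (n : ℤ) ∣ (Gsum k n).re := by
  rcases h with ⟨hk, -, hn4⟩ | rfl
  · obtain ⟨e, m, hm, rfl⟩ := Nat.exists_eq_two_pow_mul_odd hn.ne'
    have h2 : (2 : ℤ) ^ e ∣ (Gsum k (2 ^ e * m)).re := by
      obtain he | rfl | rfl : 2 ≤ e ∨ e = 1 ∨ e = 0 := by omega
      · exact ((Zsqrtd.intCast_dvd _ _).1
          (by exact_mod_cast two_pow_dvd_Gsum k he (dvd_mul_right _ m))).1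
      · obtain ⟨c, rfl⟩ := hm
        omega
      · simp
    have hm2 : IsCoprime (m : ℤ) 2 := Nat.isCoprime_iff_coprime.2 (Nat.coprime_two_right.2 hm)
    have hmG : (m : ℤ) ∣ (Gsum k (2 ^ e * m)).re :=
      hm2.dvd_of_dvd_mul_left
        ((Int.natCast_dvd_natCast.2 (dvd_mul_left m _)).trans (natCast_dvd_two_mul_re_Gsum hk _))
    push_cast
    exact hm2.symm.pow_left.mul_dvd h2 hmG
  · exact ((Zsqrtd.intCast_dvd _ _).1 (by exact_mod_cast natCast_dvd_Gsum_one n)).1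
end

section
/- Let k > 1 be an even integer and let n be a positive integer with prime factorization n = p₁^{r₁} ⋯ p_s^{r_s}. Then for each i: if r_i = 1, p_i² − 1 ∣ k and p_i ≡ 3 (mod 4), then Re(G_k(n)) ≡ −n²/p_i² (mod p_i); otherwise Re(G_k(n)) ≡ 0 (mod p_i^{r_i}). -/
open Finset

local notation "ℤ[i]" => GaussianInt

namespace Function.Periodic

variable {M : Type*} {g : ℕ → M} {m : ℕ}

theorem sum_range_mul_eq_nsmul [AddCommMonoid M] (hg : Periodic g m) (t : ℕ) :
    ∑ a ∈ range (t * m), g a = t • ∑ a ∈ range m, g a := by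
  induction t with
  | zero => simp
  | succ t ih =>
    rw [add_mul, one_mul, sum_range_add, ih, succ_nsmul]
    congr 1
    exact sum_congr rfl fun a _ => by simpa [add_comm] using hg.nat_mul t a

theorem sum_Icc_one_mul_eq_nsmul [AddCommGroup M] (hg : Periodic g m) (t : ℕ) :
    ∑ a ∈ Icc 1 (t * m), g a = t • ∑ a ∈ range m, g a := by
  have h := sum_range_succ g (t * m)
  rw [sum_range_succ', ← Nat.Ico_zero_eq_range, sum_Ico_add', zero_add,
    show g (t * m) = g 0 by simpa using hg.nat_mul t 0, add_left_inj] at h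
  rw [← sum_range_mul_eq_nsmul hg, ← Nat.Ico_zero_eq_range, ← h, Ico_add_one_right_eq_Icc]

end Function.Periodic

theorem Finset.sum_range_mul_eq_sum_range_sum_range {M : Type*} [AddCommMonoid M] (f : ℕ → M)
    (q m : ℕ) : ∑ x ∈ range (q * m), f x = ∑ a ∈ range m, ∑ u ∈ range q, f (a + m * u) := by
  induction q with
  | zero => simp
  | succ q ih =>
    simp only [add_mul, one_mul, sum_range_add, ih, sum_range_succ, sum_add_distrib]
    exact congrArg _ (sum_congr rfl fun a _ => by rw [add_comm, mul_comm])

theorem ZMod.sum_val_eq_sum_range {M : Type*} [AddCommMonoid M] (m : ℕ) [NeZero m]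
    (f : ℕ → M) : ∑ x : ZMod m, f x.val = ∑ a ∈ range m, f a :=
  sum_nbij' ZMod.val (↑) (fun x _ => mem_range.2 x.val_lt) (fun _ _ => mem_univ _)
    (fun x _ => ZMod.natCast_zmod_val x) (fun _ ha => ZMod.val_cast_of_lt (mem_range.1 ha))
    (fun _ _ => rfl)

theorem FiniteField.sum_pow_of_ne_zero {K : Type*} [Field K] [Fintype K] [DecidableEq K] {k : ℕ}
    (hk : k ≠ 0) : ∑ x : K, x ^ k = if Fintype.card K - 1 ∣ k then -1 else 0 := by
  rw [← FiniteField.sum_pow_units,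
    Fintype.sum_equiv unitsEquivNeZero (fun u : Kˣ => (u : K) ^ k) (fun x => (x : K) ^ k)
      fun _ => rfl,
    ← sum_subtype {x | x ≠ 0} (by simp) (· ^ k), sum_filter_of_ne]
  rintro x - hx rfl
  exact hx (zero_pow hk)

namespace GaussianInt

theorem natCast_dvd_iff {m : ℕ} {z : ℤ[i]} :
    (m : ℤ[i]) ∣ z ↔ (z.re : ZMod m) = 0 ∧ (z.im : ZMod m) = 0 := by
  rw [← Int.cast_natCast, Zsqrtd.intCast_dvd, ZMod.intCast_zmod_eq_zero_iff_dvd,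
    ZMod.intCast_zmod_eq_zero_iff_dvd]

theorem natCast_dvd_re {m : ℕ} {z : ℤ[i]} (h : (m : ℤ[i]) ∣ z) : (m : ℤ) ∣ z.re :=
  (ZMod.intCast_zmod_eq_zero_iff_dvd _ _).mp (natCast_dvd_iff.mp h).1

theorem natCast_dvd_sum_range_sum_range_mk (q : ℕ) :
    (q : ℤ[i]) ∣ ∑ u ∈ range q, ∑ v ∈ range q, (⟨u, v⟩ : ℤ[i]) := by
  refine ⟨⟨∑ u ∈ range q, u, ∑ u ∈ range q, u⟩, ?_⟩
  simp only [Zsqrtd.decompose, sum_add_distrib, ← mul_sum, sum_const, card_range, nsmul_eq_mul]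
  push_cast; ring

theorem bijective_quotientMk_val (m : ℕ) [NeZero m] :
    Function.Bijective fun w : ZMod m × ZMod m =>
      Ideal.Quotient.mk (Ideal.span {(m : ℤ[i])}) ⟨w.1.val, w.2.val⟩ := by
  simp only [Function.Bijective, Function.Injective, Function.Surjective,
    Ideal.Quotient.mk_eq_mk_iff_sub_mem, Ideal.mem_span_singleton, natCast_dvd_iff]
  refine ⟨fun w w' h => ?_, fun z => ?_⟩
  · simp only [Zsqrtd.re_sub, Zsqrtd.im_sub, Int.cast_sub, Int.cast_natCast,
      ZMod.natCast_zmod_val, sub_eq_zero] at h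
    exact Prod.ext h.1 h.2
  · obtain ⟨y, rfl⟩ := Ideal.Quotient.mk_surjective z
    refine ⟨(y.re, y.im), ?_⟩
    rw [Ideal.Quotient.mk_eq_mk_iff_sub_mem, Ideal.mem_span_singleton, natCast_dvd_iff]
    simp

end GaussianInt

def gsumRange (k m : ℕ) : ℤ[i] :=
  ∑ a ∈ range m, ∑ b ∈ range m, (⟨a, b⟩ : ℤ[i]) ^ k

theorem dvd_Gsum_mul_sub (k t m : ℕ) :
    (m : ℤ[i]) ∣ Gsum k (t * m) - (t ^ 2 : ℕ) * gsumRange k m := by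
  rw [← Ideal.Quotient.eq_zero_iff_dvd, map_sub, sub_eq_zero]
  set π := Ideal.Quotient.mk (Ideal.span {(m : ℤ[i])})
  have hm : π m = 0 := Ideal.Quotient.eq_zero_iff_dvd _ _ |>.mpr dvd_rfl
  have hper (a b : ℕ) : π ⟨(a + m : ℕ), b⟩ = π ⟨a, b⟩ ∧ π ⟨a, (b + m : ℕ)⟩ = π ⟨a, b⟩ := by
    constructor <;> rw [Zsqrtd.decompose, Zsqrtd.decompose] <;> push_cast <;>
      simp only [map_add, map_mul, map_natCast, hm] <;> ring
  have hrow (a : ℕ) := Function.Periodic.sum_Icc_one_mul_eq_nsmul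
    (g := fun b => π ⟨a, b⟩ ^ k) (m := m) (fun b => by simp only [(hper a b).2]) t
  have hcol := Function.Periodic.sum_Icc_one_mul_eq_nsmul
    (g := fun a => ∑ b ∈ range m, π ⟨a, b⟩ ^ k) (m := m) (fun a => by simp only [(hper a _).1]) t
  simp only [Gsum, gsumRange, map_sum, map_pow, map_mul, map_natCast, hrow]
  rw [← smul_sum, hcol, smul_smul, nsmul_eq_mul]
  push_cast; ring

theorem dvd_sum_pow_add_mul_mk_sub {q M : ℕ} (hqM : q ∣ M) (z : ℤ[i]) (k : ℕ) :
    ((q * M : ℕ) : ℤ[i]) ∣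
      ∑ u ∈ range q, ∑ v ∈ range q, (z + M * ⟨u, v⟩) ^ k - (q ^ 2 : ℕ) * z ^ k := by
  have hsplit : ∑ u ∈ range q, ∑ v ∈ range q, (z + M * ⟨u, v⟩) ^ k - (q ^ 2 : ℕ) * z ^ k =
      ∑ u ∈ range q, ∑ v ∈ range q,
        ((z + M * ⟨u, v⟩) ^ k - z ^ (k - 1) * (M * ⟨u, v⟩) * k - z ^ k) +
      M * (k * z ^ (k - 1)) * ∑ u ∈ range q, ∑ v ∈ range q, (⟨u, v⟩ : ℤ[i]) := by
    have hconst : ((q ^ 2 : ℕ) : ℤ[i]) * z ^ k = ∑ u ∈ range q, ∑ v ∈ range q, z ^ k := by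
      simp only [sum_const, card_range, nsmul_eq_mul]; push_cast; ring
    simp only [hconst, mul_sum, ← sum_add_distrib, ← sum_sub_distrib]
    exact sum_congr rfl fun u _ => sum_congr rfl fun v _ => by ring
  have hM2 : ((q * M : ℕ) : ℤ[i]) ∣ (M : ℤ[i]) ^ 2 := by
    rw [sq, ← Nat.cast_mul]; exact Nat.cast_dvd_cast (mul_dvd_mul_right hqM M)
  rw [hsplit]
  refine dvd_add (dvd_sum fun u _ => dvd_sum fun v _ => ?_) ?_
  · exact hM2.trans ((pow_dvd_pow_of_dvd (dvd_mul_right _ _) 2).trans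
      (sq_dvd_add_pow_sub_sub _ z k))
  · rw [Nat.cast_mul, mul_comm (q : ℤ[i]), mul_assoc]
    exact mul_dvd_mul_left _ ((GaussianInt.natCast_dvd_sum_range_sum_range_mk q).mul_left _)

theorem dvd_gsumRange_mul_sub {q M : ℕ} (hqM : q ∣ M) (k : ℕ) :
    ((q * M : ℕ) : ℤ[i]) ∣ gsumRange k (q * M) - (q ^ 2 : ℕ) * gsumRange k M := by
  have hdecomp : gsumRange k (q * M) = ∑ a ∈ range M, ∑ b ∈ range M,
      ∑ u ∈ range q, ∑ v ∈ range q, ((⟨a, b⟩ : ℤ[i]) + M * ⟨u, v⟩) ^ k := by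
    simp only [gsumRange, sum_range_mul_eq_sum_range_sum_range]
    refine sum_congr rfl fun a _ => sum_comm.trans (sum_congr rfl fun b _ => ?_)
    refine sum_congr rfl fun u _ => sum_congr rfl fun v _ => ?_
    congr 1; ext <;> simp
  rw [hdecomp, gsumRange, mul_sum, ← sum_sub_distrib]
  refine dvd_sum fun a _ => ?_
  rw [mul_sum, ← sum_sub_distrib]
  exact dvd_sum fun b _ => dvd_sum_pow_add_mul_mk_sub hqM _ k

theorem pow_dvd_gsumRange_pow (p : ℕ) {r : ℕ} (hr : 2 ≤ r) (k : ℕ) :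
    (p : ℤ[i]) ^ r ∣ gsumRange k (p ^ r) := by
  induction r, hr using Nat.le_induction with
  | base =>
    have h := dvd_gsumRange_mul_sub (dvd_refl p) k
    rw [← sq, Nat.cast_pow] at h
    exact (dvd_sub_left (dvd_mul_right _ _)).mp h
  | succ r hr ih =>
    have h := dvd_gsumRange_mul_sub (dvd_pow_self p (by omega : r ≠ 0)) k
    rw [← pow_succ', Nat.cast_pow] at h
    refine (dvd_sub_left ?_).mp h
    rw [Nat.cast_pow, pow_succ']
    exact mul_dvd_mul (dvd_pow_self _ two_ne_zero) ih

theorem map_gsumRange_eq_zero {m : ℕ} [NeZero m] (φ : ℤ[i] →+* ZMod m) (k : ℕ) :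
    φ (gsumRange k m) = 0 := by
  have hrow (b : ℕ) :
      ∑ a ∈ range m, ((a : ZMod m) + φ Zsqrtd.sqrtd * b) ^ k = ∑ x : ZMod m, x ^ k := by
    rw [← ZMod.sum_val_eq_sum_range m (fun a => ((a : ZMod m) + φ Zsqrtd.sqrtd * b) ^ k)]
    simp only [ZMod.natCast_zmod_val]
    exact Fintype.sum_equiv (Equiv.addRight _) _ _ fun _ => rfl
  simp only [gsumRange, map_sum, map_pow, Zsqrtd.decompose, map_add, map_mul,
    Int.cast_natCast, map_natCast]
  rw [sum_comm]
  simp only [hrow, sum_const, card_range, nsmul_eq_mul, ZMod.natCast_self, zero_mul]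

theorem natCast_dvd_gsumRange_of_mod_four_eq_one {p : ℕ} [Fact p.Prime] (hp1 : p % 4 = 1)
    (k : ℕ) : (p : ℤ[i]) ∣ gsumRange k p := by
  obtain ⟨c, hc⟩ := ZMod.exists_sq_eq_neg_one_iff.mpr (by omega : p % 4 ≠ 3)
  have hc' : c * c = ((-1 : ℤ) : ZMod p) := by push_cast; exact hc.symm
  have hplus := map_gsumRange_eq_zero (Zsqrtd.lift ⟨c, hc'⟩) k
  have hminus := map_gsumRange_eq_zero (Zsqrtd.lift ⟨-c, by rw [neg_mul_neg]; exact hc'⟩) k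
  simp only [Zsqrtd.lift_apply_apply] at hplus hminus
  have htwo : (2 : ZMod p) ≠ 0 := Ring.two_ne_zero (by rw [ZMod.ringChar_zmod_n]; omega)
  have hc0 : c ≠ 0 := by rintro rfl; simp at hc
  rw [GaussianInt.natCast_dvd_iff]
  constructor
  · have : 2 * ((gsumRange k p).re : ZMod p) = 0 := by linear_combination hplus + hminus
    simpa [htwo] using this
  · have : 2 * c * ((gsumRange k p).im : ZMod p) = 0 := by linear_combination hplus - hminus
    simpa [htwo, hc0] using this

theorem quotientMk_gsumRange (m k : ℕ) [NeZero m] :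
    Ideal.Quotient.mk (Ideal.span {(m : ℤ[i])}) (gsumRange k m) =
      ∑ w : ZMod m × ZMod m,
        Ideal.Quotient.mk (Ideal.span {(m : ℤ[i])}) ⟨w.1.val, w.2.val⟩ ^ k := by
  simp only [gsumRange, map_sum, map_pow, Fintype.sum_prod_type]
  rw [← ZMod.sum_val_eq_sum_range m]
  exact sum_congr rfl fun x _ => (ZMod.sum_val_eq_sum_range m _).symm

theorem natCast_dvd_gsumRange_add_ite_of_mod_four_eq_three {p : ℕ} [Fact p.Prime]
    (hp3 : p % 4 = 3) {k : ℕ} (hk : k ≠ 0) :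
    (p : ℤ[i]) ∣ gsumRange k p + if p ^ 2 - 1 ∣ k then 1 else 0 := by
  have : (Ideal.span {(p : ℤ[i])}).IsMaximal := PrincipalIdealRing.isMaximal_of_irreducible
    (GaussianInt.prime_of_nat_prime_of_mod_four_eq_three p hp3).irreducible
  let _ := Ideal.Quotient.field (Ideal.span {(p : ℤ[i])})
  let _ := Fintype.ofBijective _ (GaussianInt.bijective_quotientMk_val p)
  classical
  have hcard : Fintype.card (ℤ[i] ⧸ Ideal.span {(p : ℤ[i])}) = p ^ 2 := by
    rw [← Fintype.card_of_bijective (GaussianInt.bijective_quotientMk_val p), Fintype.card_prod,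
      ZMod.card, sq]
  rw [← Ideal.Quotient.eq_zero_iff_dvd, map_add, quotientMk_gsumRange,
    (GaussianInt.bijective_quotientMk_val p).sum_comp (· ^ k), FiniteField.sum_pow_of_ne_zero hk,
    hcard]
  split_ifs <;> simp

theorem two_dvd_gsumRange_two {k : ℕ} (hk : k ≠ 0) (hke : Even k) :
    (2 : ℤ[i]) ∣ gsumRange k 2 := by
  obtain ⟨j, rfl⟩ := hke
  have hj : j ≠ 0 := by omega
  have hi : (⟨0, 1⟩ : ℤ[i]) ^ 2 = -1 := by ext <;> simp [sq]
  have h1i : (⟨1, 1⟩ : ℤ[i]) ^ 2 = 2 * ⟨0, 1⟩ := by ext <;> simp [sq]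
  have h2 : (2 : ℤ[i]) ∣ (2 * ⟨0, 1⟩) ^ j := dvd_pow (dvd_mul_right _ _) hj
  simp only [gsumRange, sum_range_succ, sum_range_zero, Nat.cast_zero, Nat.cast_one, zero_add,
    ← two_mul, pow_mul, hi, h1i]
  rw [show (⟨0, 0⟩ : ℤ[i]) = 0 from rfl, show (⟨1, 0⟩ : ℤ[i]) = 1 from rfl]
  rw [zero_pow two_ne_zero, zero_pow hj, one_pow, one_pow, zero_add]
  rcases neg_one_pow_eq_or ℤ[i] j with h | h <;> rw [h]
  · rw [← add_assoc, one_add_one_eq_two]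
    exact dvd_add dvd_rfl h2
  · rwa [neg_add_cancel_left]

theorem natCast_dvd_gsumRange_of_prime {p k : ℕ} (hp : p.Prime) (hk : k ≠ 0) (hke : Even k)
    (h : ¬(p ^ 2 - 1 ∣ k ∧ p % 4 = 3)) : (p : ℤ[i]) ∣ gsumRange k p := by
  have := Fact.mk hp
  rcases hp.eq_two_or_odd' with rfl | hodd
  · exact_mod_cast two_dvd_gsumRange_two hk hke
  by_cases hp3 : p % 4 = 3
  · have hkp : ¬p ^ 2 - 1 ∣ k := fun hkp => h ⟨hkp, hp3⟩
    simpa [hkp] using natCast_dvd_gsumRange_add_ite_of_mod_four_eq_three hp3 hk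
  · exact natCast_dvd_gsumRange_of_mod_four_eq_one (by rcases hodd with ⟨j, rfl⟩; omega) k

theorem re_Gsum_even_k_prime_power_general (k n : ℕ) (hk : 1 < k) (hke : Even k)
    (p : ℕ) (hp : p.Prime) :
    (n.factorization p = 1 ∧ (p ^ 2 - 1) ∣ k ∧ p % 4 = 3 →
      (p : ℤ) ∣ (Gsum k n).re + (((n / p) ^ 2 : ℕ) : ℤ)) ∧
    (¬(n.factorization p = 1 ∧ (p ^ 2 - 1) ∣ k ∧ p % 4 = 3) →
      ((p ^ n.factorization p : ℕ) : ℤ) ∣ (Gsum k n).re) := by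
  set r := n.factorization p
  have hGsum := dvd_Gsum_mul_sub k (n / p ^ r) (p ^ r)
  rw [Nat.div_mul_cancel (Nat.ordProj_dvd n p)] at hGsum
  constructor
  · rintro ⟨hr, hkp, hp3⟩
    have := Fact.mk hp
    have hT := natCast_dvd_gsumRange_add_ite_of_mod_four_eq_three hp3 (by omega : k ≠ 0)
    rw [if_pos hkp] at hT
    rw [hr, pow_one] at hGsum
    have : (p : ℤ[i]) ∣ Gsum k n + ((n / p) ^ 2 : ℕ) := by
      convert dvd_add hGsum (hT.mul_left ((n / p) ^ 2 : ℕ)) using 1; ring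
    simpa only [Zsqrtd.re_add, Zsqrtd.re_natCast] using GaussianInt.natCast_dvd_re this
  · intro hnot
    have hT : ((p ^ r : ℕ) : ℤ[i]) ∣ gsumRange k (p ^ r) := by
      rcases Nat.lt_or_ge r 2 with hr | hr
      · interval_cases r
        · simp
        · simpa using natCast_dvd_gsumRange_of_prime hp (by omega) hke (by tauto)
      · exact_mod_cast pow_dvd_gsumRange_pow p hr k
    exact GaussianInt.natCast_dvd_re ((dvd_sub_left (hT.mul_left _)).mp hGsum)

theorem re_Gsum_even_k_prime_power (k n : ℕ) (hk : 1 < k) (hke : Even k) (hn : 0 < n)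
    (p : ℕ) (hp : p.Prime) (hpn : p ∣ n) :
    (n.factorization p = 1 ∧ (p ^ 2 - 1) ∣ k ∧ p % 4 = 3 →
      (p : ℤ) ∣ (Gsum k n).re + (((n / p) ^ 2 : ℕ) : ℤ)) ∧
    (¬(n.factorization p = 1 ∧ (p ^ 2 - 1) ∣ k ∧ p % 4 = 3) →
      ((p ^ n.factorization p : ℕ) : ℤ) ∣ (Gsum k n).re) :=
  re_Gsum_even_k_prime_power_general k n hk hke p hp
end

section
/- The infinite product over all primes p ≡ 3 (mod 4) of (p² − p + 1)/p² equals 0; that is, the partial products over primes p ≡ 3 (mod 4) with p ≤ N tend to 0 as N → ∞. -/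
open Filter Finset

/-- `log t ≤ t^ε / ε` for `t ≥ 0`, `ε > 0`. -/
lemma aux_log_le_rpow_div {t ε : ℝ} (ht : 0 ≤ t) (hε : 0 < ε) :
    Real.log t ≤ t ^ ε / ε := by
  rcases eq_or_lt_of_le ht with h | h
  · simp [← h, Real.zero_rpow hε.ne']
  · have h1 : Real.log (t ^ ε) ≤ t ^ ε - 1 :=
      Real.log_le_sub_one_of_pos (Real.rpow_pos_of_pos h ε)
    rw [Real.log_rpow h] at h1
    rw [le_div_iff₀ hε]
    nlinarith [Real.rpow_pos_of_pos h ε]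

/-- The sum of `1/p` over primes `p ≡ 3 mod 4` diverges. -/
lemma aux_not_summable :
    ¬ Summable (fun n : ℕ => if n.Prime ∧ n % 4 = 3 then (1 : ℝ) / n else 0) := by
  intro hg
  set g : ℕ → ℝ := fun n => if n.Prime ∧ n % 4 = 3 then (1 : ℝ) / n else 0 with hgdef
  have ha : IsUnit (3 : ZMod 4) := by decide
  set R : ℕ → ℝ := ArithmeticFunction.vonMangoldt.residueClass (3 : ZMod 4) with hRdef
  have hR_nonneg : ∀ n, 0 ≤ R n := fun n =>
    ArithmeticFunction.vonMangoldt.residueClass_nonneg _ n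
  have hR_le : ∀ n : ℕ, R n ≤ Real.log n := fun n =>
    (ArithmeticFunction.vonMangoldt.residueClass_le _ n).trans
      ArithmeticFunction.vonMangoldt_le_log
  -- membership in the residue class
  have hmem : ∀ n : ℕ, ((n : ZMod 4) = (3 : ZMod 4)) ↔ n % 4 = 3 := by
    intro n
    simpa using ZMod.natCast_eq_natCast_iff' n 3 4
  obtain ⟨C, hC⟩ := ArithmeticFunction.vonMangoldt.LSeries_residueClass_lower_bound ha
  -- choose a tail cutoff
  obtain ⟨P, hP⟩ : ∃ P : ℕ, ∑' k, g (k + P) < 1 / 4 :=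
    ((tendsto_sum_nat_add g).eventually (gt_mem_nhds (by norm_num : (0:ℝ) < 1/4))).exists
  set B : ℝ := ∑ n ∈ Finset.range P, Real.log n / n with hBdef
  set D : ℝ := ∑' n : ℕ, (if n.Prime then 0 else R n) / n with hDdef
  set M : ℝ := C + B + D with hMdef
  set δ : ℝ := min 1 (1 / (4 * (max M 0 + 1))) with hδdef
  have hA : (0:ℝ) < 4 * (max M 0 + 1) := by positivity
  have hδ0 : 0 < δ := lt_min one_pos (by positivity)
  have hδ1 : δ ≤ 1 := min_le_left _ _
  set x : ℝ := 1 + δ with hxdef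
  have hx1 : (1:ℝ) < x := by rw [hxdef]; linarith
  have hx : x ∈ Set.Ioc (1:ℝ) 2 := ⟨hx1, by rw [hxdef]; linarith⟩
  have hxd : x - 1 = δ := by rw [hxdef]; ring
  -- basic facts about n ^ x
  have hn_rpow : ∀ n : ℕ, 1 ≤ n → (n : ℝ) ≤ (n : ℝ) ^ x := by
    intro n hn
    have h1 : (1:ℝ) ≤ (n:ℝ) := by exact_mod_cast hn
    calc (n:ℝ) = (n:ℝ) ^ (1:ℝ) := by rw [Real.rpow_one]
    _ ≤ (n:ℝ) ^ x := Real.rpow_le_rpow_of_exponent_le h1 hx1.le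
  -- summability of R n / n ^ x
  have hxne : x ≠ 0 := by linarith
  have hexne : -(x+1)/2 ≠ 0 := ne_of_lt (by linarith)
  have hmaj : ∀ n : ℕ, R n / (n:ℝ) ^ x ≤ (2 / (x - 1)) * (n:ℝ) ^ (-(x+1)/2) := by
    intro n
    rcases Nat.eq_zero_or_pos n with rfl | hn
    · rw [Nat.cast_zero, Real.zero_rpow hxne, div_zero, Real.zero_rpow hexne, mul_zero]
    have hnp : (0:ℝ) < n := by exact_mod_cast hn
    have hε2 : (0:ℝ) < (x - 1) / 2 := by linarith
    have hone : x - 1 ≠ 0 := by linarith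
    have h1 : R n ≤ (n:ℝ) ^ ((x-1)/2) / ((x-1)/2) :=
      (hR_le n).trans (aux_log_le_rpow_div (Nat.cast_nonneg n) hε2)
    have hpow : (0:ℝ) ≤ (n:ℝ) ^ x := (Real.rpow_pos_of_pos hnp x).le
    calc R n / (n:ℝ) ^ x ≤ ((n:ℝ) ^ ((x-1)/2) / ((x-1)/2)) / (n:ℝ) ^ x :=
          div_le_div_of_nonneg_right h1 hpow
    _ = ((n:ℝ) ^ ((x-1)/2) / (n:ℝ) ^ x) / ((x-1)/2) := by ring
    _ = ((n:ℝ) ^ (-(x+1)/2)) / ((x-1)/2) := by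
          rw [← Real.rpow_sub hnp]; congr 1; ring
    _ = (2 / (x - 1)) * (n:ℝ) ^ (-(x+1)/2) := by
          field_simp
  have hsum_rhs : Summable (fun n : ℕ => (2 / (x - 1)) * (n:ℝ) ^ (-(x+1)/2)) :=
    (Real.summable_nat_rpow.mpr (by linarith)).mul_left _
  have hR_div_nonneg : ∀ n : ℕ, 0 ≤ R n / (n:ℝ) ^ x := fun n =>
    div_nonneg (hR_nonneg n) (Real.rpow_nonneg (Nat.cast_nonneg n) x)
  have hRsum : Summable (fun n : ℕ => R n / (n:ℝ) ^ x) :=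
    Summable.of_nonneg_of_le hR_div_nonneg hmaj hsum_rhs
  -- split into prime and non-prime parts
  set t : ℕ → ℝ := fun n => (if n.Prime then R n else 0) / (n:ℝ) ^ x with htdef
  set s : ℕ → ℝ := fun n => (if n.Prime then 0 else R n) / (n:ℝ) ^ x with hsdef
  have ht_le : ∀ n, t n ≤ R n / (n:ℝ) ^ x := by
    intro n
    apply div_le_div_of_nonneg_right _ (Real.rpow_nonneg (Nat.cast_nonneg n) x)
    split_ifs; exacts [le_rfl, hR_nonneg n]
  have hs_le : ∀ n, s n ≤ R n / (n:ℝ) ^ x := by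
    intro n
    apply div_le_div_of_nonneg_right _ (Real.rpow_nonneg (Nat.cast_nonneg n) x)
    split_ifs; exacts [hR_nonneg n, le_rfl]
  have ht_nonneg : ∀ n, 0 ≤ t n := by
    intro n
    apply div_nonneg _ (Real.rpow_nonneg (Nat.cast_nonneg n) x)
    split_ifs; exacts [hR_nonneg n, le_rfl]
  have hs_nonneg : ∀ n, 0 ≤ s n := by
    intro n
    apply div_nonneg _ (Real.rpow_nonneg (Nat.cast_nonneg n) x)
    split_ifs; exacts [le_rfl, hR_nonneg n]
  have ht_sum : Summable t := Summable.of_nonneg_of_le ht_nonneg ht_le hRsum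
  have hs_sum : Summable s := Summable.of_nonneg_of_le hs_nonneg hs_le hRsum
  have hsplit : ∑' n, R n / (n:ℝ) ^ x = (∑' n, t n) + (∑' n, s n) := by
    rw [← Summable.tsum_add ht_sum hs_sum]
    refine tsum_congr fun n => ?_
    rw [htdef, hsdef]
    simp only [← add_div, ite_add_ite, zero_add, add_zero, ite_self]
  -- bound the non-prime part
  have hD : ∑' n, s n ≤ D := by
    refine Summable.tsum_le_tsum (fun n => ?_) hs_sum
      (ArithmeticFunction.vonMangoldt.summable_residueClass_non_primes_div _)
    rcases Nat.eq_zero_or_pos n with rfl | hn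
    · simp [hsdef, Real.zero_rpow hxne]
    have hnp : (0:ℝ) < n := by exact_mod_cast hn
    have hnum : 0 ≤ (if n.Prime then 0 else R n) := by
      split_ifs; exacts [le_rfl, hR_nonneg n]
    exact div_le_div_of_nonneg_left hnum hnp (hn_rpow n hn)
  -- bound the prime part
  have hgsum_tail : Summable (fun k => g (k + P)) := (summable_nat_add_iff P).mpr hg
  have ht_tail : ∀ k : ℕ, t (k + P) ≤ (1 / (x - 1)) * g (k + P) := by
    intro k
    set n := k + P with hn
    by_cases hp : n.Prime ∧ n % 4 = 3
    · have hnp : (0:ℝ) < n := by exact_mod_cast hp.1.pos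
      have hRn : R n = Real.log n := by
        rw [hRdef]
        rw [ArithmeticFunction.vonMangoldt.residueClass,
          Set.indicator_of_mem (by exact (hmem n).mpr hp.2)]
        exact ArithmeticFunction.vonMangoldt_apply_prime hp.1
      have hlog : Real.log n ≤ (n:ℝ) ^ (x-1) / (x-1) :=
        aux_log_le_rpow_div (Nat.cast_nonneg n) (by linarith)
      have hgn : g n = 1 / n := by rw [hgdef]; simp [hp]
      have htn : t n = Real.log n / (n:ℝ) ^ x := by
        rw [htdef]; simp [hp.1, hRn]
      rw [htn, hgn]
      have hpow : (0:ℝ) ≤ (n:ℝ) ^ x := (Real.rpow_pos_of_pos hnp x).le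
      calc Real.log n / (n:ℝ) ^ x ≤ ((n:ℝ) ^ (x-1) / (x-1)) / (n:ℝ) ^ x :=
            div_le_div_of_nonneg_right hlog hpow
      _ = (1 / (x-1)) * ((n:ℝ) ^ (x-1) / (n:ℝ) ^ x) := by ring
      _ = (1 / (x-1)) * ((n:ℝ) ^ ((x-1) - x)) := by rw [← Real.rpow_sub hnp]
      _ = (1 / (x-1)) * (1 / n) := by
            congr 1
            rw [show (x-1) - x = -1 by ring, Real.rpow_neg_one]
            rw [one_div]
    · -- in this case `t n = 0`
      have htn : t n = 0 := by
        rw [htdef]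
        rcases Classical.em n.Prime with hpr | hpr
        · have h34 : ¬ (n % 4 = 3) := fun h => hp ⟨hpr, h⟩
          have hRn : R n = 0 := by
            rw [hRdef, ArithmeticFunction.vonMangoldt.residueClass,
              Set.indicator_of_notMem (by
                intro hmem'
                exact h34 ((hmem n).mp hmem'))]
          simp [hpr, hRn]
        · simp [hpr]
      rw [htn, hgdef]
      have : ¬ (n.Prime ∧ n % 4 = 3) := hp
      simp only [this, if_false, mul_zero]
      exact le_rfl
  have hT1 : ∑' n, t n ≤ B + (1 / (x - 1)) * ∑' k, g (k + P) := by
    rw [← Summable.sum_add_tsum_nat_add P ht_sum]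
    have h1 : ∑ n ∈ Finset.range P, t n ≤ B := by
      rw [hBdef]
      refine Finset.sum_le_sum fun n _ => ?_
      rcases Nat.eq_zero_or_pos n with rfl | hn
      · simp [htdef, Real.zero_rpow hxne]
      have hnp : (0:ℝ) < n := by exact_mod_cast hn
      have h1n : (1:ℝ) ≤ n := by exact_mod_cast hn
      have hnum : (if n.Prime then R n else 0) ≤ Real.log n := by
        split_ifs
        · exact hR_le n
        · exact Real.log_nonneg h1n
      calc t n ≤ Real.log n / (n:ℝ) ^ x :=
            div_le_div_of_nonneg_right hnum (Real.rpow_nonneg (Nat.cast_nonneg n) x)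
      _ ≤ Real.log n / n :=
            div_le_div_of_nonneg_left (Real.log_nonneg h1n) hnp (hn_rpow n hn)
    have h2 : ∑' k, t (k + P) ≤ (1 / (x - 1)) * ∑' k, g (k + P) := by
      rw [← tsum_mul_left]
      exact Summable.tsum_le_tsum ht_tail ((summable_nat_add_iff P).mpr ht_sum)
        (hgsum_tail.mul_left _)
    linarith
  -- combine
  have hlow := hC hx
  have htot : ((Nat.totient 4 : ℝ))⁻¹ = 1/2 := by norm_num [show Nat.totient 4 = 2 by decide]
  rw [htot, ← hRdef, hsplit] at hlow
  have hKP : (1 / (x - 1)) * ∑' k, g (k + P) ≤ (1/4) / (x-1) := by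
    rw [hxd] at *
    rw [div_eq_mul_one_div (1/4 : ℝ) δ, mul_comm (1/4 : ℝ)]
    have hg_tail_nonneg : 0 ≤ ∑' k, g (k + P) := by
      refine tsum_nonneg fun k => ?_
      rw [hgdef]; positivity
    have := mul_le_mul_of_nonneg_left hP.le (le_of_lt (by positivity : (0:ℝ) < 1/δ))
    calc (1/δ) * ∑' k, g (k + P) ≤ (1/δ) * (1/4) := this
    _ = 1/δ * (1/4) := rfl
  have hfinal : (1/2) / δ - C ≤ B + (1/4)/δ + D := by
    rw [← hxd]
    calc (1/2) / (x-1) - C ≤ (∑' n, t n) + (∑' n, s n) := hlow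
    _ ≤ (B + (1 / (x - 1)) * ∑' k, g (k + P)) + D := add_le_add hT1 hD
    _ ≤ (B + (1/4)/(x-1)) + D := by linarith [hKP]
    _ = B + (1/4)/(x-1) + D := rfl
  -- derive contradiction
  have hq : (1/4) / δ ≤ M := by
    have : (1/2)/δ - (1/4)/δ = (1/4)/δ := by ring
    rw [hMdef]; linarith
  have hδle : δ ≤ 1 / (4 * (max M 0 + 1)) := min_le_right _ _
  have h1 : δ * (4 * (max M 0 + 1)) ≤ 1 := by
    rw [← le_div_iff₀ hA]; exact hδle
  have h2 : 1/4 ≤ M * δ := by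
    rw [div_le_iff₀ hδ0] at hq; linarith
  nlinarith [le_max_left M 0, hδ0]

theorem prod_over_primes_three_mod_four_eq_zero :
    Filter.Tendsto
      (fun N : ℕ => ∏ p ∈ (Finset.range (N + 1)).filter (fun p => p.Prime ∧ p % 4 = 3),
        (((p : ℝ) ^ 2 - p + 1) / (p : ℝ) ^ 2))
      Filter.atTop (nhds 0) := by
  set g : ℕ → ℝ := fun n => if n.Prime ∧ n % 4 = 3 then (1 : ℝ) / n else 0 with hgdef
  have hg_nonneg : ∀ n, 0 ≤ g n := by
    intro n; rw [hgdef]; positivity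
  set S : ℕ → ℝ := fun N => ∑ n ∈ Finset.range (N + 1), g n with hSdef
  have hS_div : Tendsto S atTop atTop := by
    have h1 : Tendsto (fun n => ∑ i ∈ Finset.range n, g i) atTop atTop :=
      (not_summable_iff_tendsto_nat_atTop_of_nonneg hg_nonneg).mp aux_not_summable
    exact h1.comp (tendsto_add_atTop_nat 1)
  -- each factor is at most exp(-(1/2) * (1/p))
  have hfac : ∀ p : ℕ, p.Prime → p % 4 = 3 →
      ((p : ℝ) ^ 2 - p + 1) / (p : ℝ) ^ 2 ≤ Real.exp (-((1:ℝ)/2 * (1 / p))) := by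
    intro p hp _
    have hp2 : (2:ℝ) ≤ p := by exact_mod_cast hp.two_le
    have hp0 : (0:ℝ) < p := by linarith
    have h1 : ((p : ℝ) ^ 2 - p + 1) / (p : ℝ) ^ 2 = 1 - ((p:ℝ) - 1) / (p:ℝ)^2 := by
      field_simp
      ring
    have h2 : (1:ℝ)/2 * (1/p) ≤ ((p:ℝ) - 1) / (p:ℝ)^2 := by
      have he : (1:ℝ)/2 * (1/p) = 1/(2*p) := by ring
      rw [he, div_le_div_iff₀ (by positivity) (by positivity)]
      nlinarith
    have h3 := Real.add_one_le_exp (-((1:ℝ)/2 * (1/p)))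
    rw [h1]
    linarith
  have hfac_nonneg : ∀ p : ℕ, 0 ≤ ((p : ℝ) ^ 2 - p + 1) / (p : ℝ) ^ 2 := by
    intro p
    apply div_nonneg _ (by positivity)
    nlinarith [sq_nonneg ((p:ℝ) - 1)]
  -- the product is bounded by exp(-(1/2) * S N)
  have hbound : ∀ N : ℕ,
      (∏ p ∈ (Finset.range (N + 1)).filter (fun p => p.Prime ∧ p % 4 = 3),
        (((p : ℝ) ^ 2 - p + 1) / (p : ℝ) ^ 2)) ≤ Real.exp (-((1:ℝ)/2) * S N) := by
    intro N
    have h1 : (∏ p ∈ (Finset.range (N + 1)).filter (fun p => p.Prime ∧ p % 4 = 3),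
        (((p : ℝ) ^ 2 - p + 1) / (p : ℝ) ^ 2)) ≤
        ∏ p ∈ (Finset.range (N + 1)).filter (fun p => p.Prime ∧ p % 4 = 3),
          Real.exp (-((1:ℝ)/2 * (1 / (p:ℝ)))) := by
      refine Finset.prod_le_prod (fun p _ => hfac_nonneg p) fun p hp => ?_
      rw [Finset.mem_filter] at hp
      exact hfac p hp.2.1 hp.2.2
    refine h1.trans ?_
    rw [← Real.exp_sum]
    apply le_of_eq
    have hsum_eq : ∑ p ∈ (Finset.range (N+1)).filter (fun p => p.Prime ∧ p % 4 = 3),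
        (-((1:ℝ)/2 * (1/(p:ℝ)))) = -((1:ℝ)/2) * S N := by
      rw [Finset.sum_filter, hSdef]
      simp only [Finset.mul_sum, hgdef, mul_ite, mul_zero]
      refine Finset.sum_congr rfl fun n _ => ?_
      split_ifs <;> ring
    exact congrArg Real.exp hsum_eq
  have hexp : Tendsto (fun N => Real.exp (-((1:ℝ)/2) * S N)) atTop (nhds 0) := by
    apply Real.tendsto_exp_atBot.comp
    have h1 : Tendsto (fun N => ((1:ℝ)/2) * S N) atTop atTop :=
      hS_div.const_mul_atTop (by norm_num)
    have h2 : Tendsto (fun N => -(((1:ℝ)/2) * S N)) atTop atBot :=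
      tendsto_neg_atBot_iff.mpr h1
    convert h2 using 2 with N
    ring
  exact squeeze_zero (fun N => Finset.prod_nonneg fun p _ => hfac_nonneg p) hbound hexp
end

section
/- Let 2 < q < p be two prime numbers and let s, t be integers with 0 < s < p and 0 < t < q. Then the Diophantine equation (p³ − p)(Yp + s) = (q³ − q)(Xq + t) has a solution in nonnegative integers X, Y if and only if q² does not divide p² − 1. -/
lemma dioph_key (p q s t A B C D : ℕ) (hp : p.Prime) (hq : q.Prime) (hpq : p ≠ q)
    (hsp : s < p) (htq : t < q)
    (hABCD : A * C = B * D) (hpC : ¬ p ∣ C) (hqD : ¬ q ∣ D) :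
    ∃ X Y : ℕ, A * (Y * p + s) = B * (X * q + t) := by
  haveI : Fact p.Prime := ⟨hp⟩
  haveI : Fact q.Prime := ⟨hq⟩
  set a := (((C : ZMod p)⁻¹ * s : ZMod p)).val with ha
  set b := (((D : ZMod q)⁻¹ * t : ZMod q)).val with hb
  obtain ⟨k, hk1, hk2⟩ := Nat.chineseRemainder ((Nat.coprime_primes hp hq).mpr hpq) a b
  have hCp : (C : ZMod p) ≠ 0 := by
    rwa [Ne, ZMod.natCast_eq_zero_iff]
  have hDq : (D : ZMod q) ≠ 0 := by
    rwa [Ne, ZMod.natCast_eq_zero_iff]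
  have h1 : s ≡ C * k [MOD p] := by
    symm
    rw [← ZMod.natCast_eq_natCast_iff]
    push_cast
    rw [(ZMod.natCast_eq_natCast_iff _ _ _).mpr hk1, ha, ZMod.natCast_val, ZMod.cast_id]
    field_simp
  have h2 : t ≡ D * k [MOD q] := by
    symm
    rw [← ZMod.natCast_eq_natCast_iff]
    push_cast
    rw [(ZMod.natCast_eq_natCast_iff _ _ _).mpr hk2, hb, ZMod.natCast_val, ZMod.cast_id]
    field_simp
  have hsle : s ≤ C * k := by
    have := h1.symm
    unfold Nat.ModEq at this
    rw [Nat.mod_eq_of_lt hsp] at this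
    calc s = (C * k) % p := this.symm
    _ ≤ C * k := Nat.mod_le _ _
  have htle : t ≤ D * k := by
    have := h2.symm
    unfold Nat.ModEq at this
    rw [Nat.mod_eq_of_lt htq] at this
    calc t = (D * k) % q := this.symm
    _ ≤ D * k := Nat.mod_le _ _
  have hpd : p ∣ C * k - s := (Nat.modEq_iff_dvd' hsle).mp h1
  have hqd : q ∣ D * k - t := (Nat.modEq_iff_dvd' htle).mp h2
  refine ⟨(D * k - t) / q, (C * k - s) / p, ?_⟩
  rw [Nat.div_mul_cancel hpd, Nat.div_mul_cancel hqd]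
  have e1 : C * k - s + s = C * k := by omega
  have e2 : D * k - t + t = D * k := by omega
  rw [e1, e2, ← mul_assoc, ← mul_assoc, hABCD]

theorem diophantine_solvable_iff (p q : ℕ) (hq : q.Prime) (hp : p.Prime)
    (h2q : 2 < q) (hqp : q < p) (s t : ℕ) (hs0 : 0 < s) (hsp : s < p)
    (ht0 : 0 < t) (htq : t < q) :
    (∃ X Y : ℕ, (p ^ 3 - p) * (Y * p + s) = (q ^ 3 - q) * (X * q + t)) ↔
      ¬ q ^ 2 ∣ p ^ 2 - 1 := by
  have hpq : p ≠ q := (Nat.ne_of_lt hqp).symm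
  have hAe : p ^ 3 - p = p * (p ^ 2 - 1) := by rw [Nat.mul_sub, mul_one, ← pow_succ']
  have hBe : q ^ 3 - q = q * (q ^ 2 - 1) := by rw [Nat.mul_sub, mul_one, ← pow_succ']
  have hq0 : 0 < q := hq.pos
  have hq1 : 1 < q := hq.one_lt
  have hp1 : 1 < p := hp.one_lt
  have hpodd : Odd p := hp.odd_of_ne_two (by omega)
  have hqodd : Odd q := hq.odd_of_ne_two (by omega)
  -- p does not divide q^2 - 1
  have hpq2 : ¬ p ∣ q ^ 2 - 1 := by
    rw [show q ^ 2 - 1 = q ^ 2 - 1 ^ 2 by norm_num, Nat.sq_sub_sq]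
    intro h
    rcases (Nat.Prime.dvd_mul hp).mp h with h' | h'
    · -- p ∣ q + 1, but q + 1 < p since q+1 even, p odd, p > q
      have hle : p ≤ q + 1 := Nat.le_of_dvd (by omega) h'
      have : p = q + 1 := by omega
      rcases hpodd with ⟨m, hm⟩; rcases hqodd with ⟨n, hn⟩; omega
    · have hle : p ≤ q - 1 := Nat.le_of_dvd (by omega) h'
      omega
  constructor
  · rintro ⟨X, Y, hXY⟩ hdvd
    rw [hAe, hBe] at hXY
    have hq2L : q * q ∣ p * (p ^ 2 - 1) * (Y * p + s) := by
      have : q * q ∣ p ^ 2 - 1 := by rw [← sq]; exact hdvd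
      exact Dvd.dvd.mul_right (Dvd.dvd.mul_left this p) _
    rw [hXY, mul_assoc] at hq2L
    have hq2R : q ∣ (q ^ 2 - 1) * (X * q + t) :=
      (mul_dvd_mul_iff_left (by omega : q ≠ 0)).mp hq2L
    rcases (Nat.Prime.dvd_mul hq).mp hq2R with h' | h'
    · have h2 : q ∣ q ^ 2 := dvd_pow_self q (by norm_num)
      have h3 := Nat.dvd_sub h2 h'
      have e : q ^ 2 - (q ^ 2 - 1) = 1 := by
        have : 1 ≤ q ^ 2 := Nat.one_le_pow _ _ hq0
        omega
      rw [e] at h3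
      exact absurd (Nat.le_of_dvd one_pos h3) (by omega)
    · have : q ∣ t := (Nat.dvd_add_right (Dvd.intro_left X rfl)).mp h'
      have := Nat.le_of_dvd ht0 this
      omega
  · intro hndvd
    rw [hAe, hBe]
    by_cases hqd : q ∣ p ^ 2 - 1
    · -- q exactly divides: p^2 - 1 = q * m with q ∤ m
      obtain ⟨m, hm⟩ := hqd
      have hqm : ¬ q ∣ m := by
        intro ⟨m', hm'⟩
        exact hndvd ⟨m', by rw [hm, hm', sq]; ring⟩
      refine dioph_key p q s t _ _ (q ^ 2 - 1) (p * m) hp hq hpq hsp htq ?_ hpq2 ?_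
      · rw [hm]; ring
      · intro h
        rcases (Nat.Prime.dvd_mul hq).mp h with h' | h'
        · exact hpq ((Nat.prime_dvd_prime_iff_eq hq hp).mp h').symm
        · exact hqm h'
    · refine dioph_key p q s t _ _ (q * (q ^ 2 - 1)) (p * (p ^ 2 - 1)) hp hq hpq hsp htq (mul_comm _ _) ?_ ?_
      · intro h
        rcases (Nat.Prime.dvd_mul hp).mp h with h' | h'
        · exact hpq ((Nat.prime_dvd_prime_iff_eq hp hq).mp h')
        · exact hpq2 h'
      · intro h
        rcases (Nat.Prime.dvd_mul hq).mp h with h' | h'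
        · exact hpq ((Nat.prime_dvd_prime_iff_eq hq hp).mp h').symm
        · exact hqd h'
end

section
/- For a prime p and an integer s with 0 < s < p, define 𝔉(p, s) := {p(p − 1)(p + 1)(Kp + s) : K ∈ ℕ}. Let 𝒫 be a nonempty finite family of odd primes and for each q ∈ 𝒫 let s_q satisfy 0 < s_q < q. Then the asymptotic density of ⋂_{q ∈ 𝒫} 𝔉(q, s_q) exists and equals 0 if there exist p, q ∈ 𝒫 with p² ∣ q² − 1, and equals 1/lcm{q⁴ − q² : q ∈ 𝒫} otherwise. -/
/-- `𝔉(p, s) = {p(p − 1)(p + 1)(Kp + s) : K ∈ ℕ}`. -/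
def FrSet (p s : ℕ) : Set ℕ := {m | ∃ K : ℕ, m = p * (p - 1) * (p + 1) * (K * p + s)}

/-- `A ⊆ ℕ` has asymptotic density `d`. -/
def hasDensity (A : Set ℕ) (d : ℝ) : Prop :=
  Filter.Tendsto (fun N : ℕ => ((A ∩ Set.Icc 1 N).ncard : ℝ) / N) Filter.atTop (nhds d)

/-!
Since `p(p − 1)(p + 1)(Kp + s) = p²(p² − 1)K + p(p² − 1)s` with `p(p² − 1)s < p²(p² − 1)`,
`𝔉(p, s)` is the residue class of `p(p² − 1)s` modulo `p²(p² − 1) = p⁴ − p²`. Every element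
of `𝔉(q, s_q)` is divisible by `q² − 1`, while no element of `𝔉(p, s_p)` is divisible by `p²`;
so the intersection is empty as soon as `p² ∣ q² − 1`. Otherwise no `q²` divides
`T = lcm (q² − 1)`, which makes the congruences `x ≡ 0 [MOD T]`, `x ≡ q(q² − 1)s_q [MOD q²]`
compatible; a simultaneous solution `x` lies in every `𝔉(q, s_q)`, the intersection is the
residue class of `x` modulo `lcm (q⁴ − q²)`, and a residue class modulo `L` has density `1/L`.
-/

open Filter Finset

theorem hasDensity_of_abs_sub_le {A : Set ℕ} {d : ℝ} (C : ℝ)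
    (h : ∀ N : ℕ, |((A ∩ Set.Icc 1 N).ncard : ℝ) - d * N| ≤ C) : hasDensity A d := by
  rw [hasDensity, ← tendsto_sub_nhds_zero_iff]
  refine squeeze_zero_norm' ?_ (tendsto_const_div_atTop_nhds_zero_nat C)
  filter_upwards [eventually_gt_atTop 0] with N hN
  have hN' : (0 : ℝ) < N := by exact_mod_cast hN
  rw [Real.norm_eq_abs, ← mul_div_cancel_right₀ d hN'.ne', ← sub_div, abs_div,
    abs_of_pos hN']
  exact div_le_div_of_nonneg_right (h N) hN'.le

theorem abs_card_setOf_modEq_inter_Icc_sub_le {d : ℕ} (hd : 0 < d) (x N : ℕ) :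
    |(({m | m ≡ x [MOD d]} ∩ Set.Icc 1 N).ncard : ℝ) - 1 / d * N| ≤ 1 := by
  have hset : {m | m ≡ x [MOD d]} ∩ Set.Icc 1 N = ↑({m ∈ Ioc 0 N | m ≡ x [MOD d]}) := by
    ext m
    simp [and_comm, Nat.one_le_iff_ne_zero, Nat.pos_iff_ne_zero]
  have hcount := Nat.Ioc_filter_modEq_card 0 N hd x
  rw [Nat.cast_zero] at hcount
  set a : ℚ := (N - x) / d
  set b : ℚ := (0 - x) / d
  have hab : a - b = 1 / d * N := by simp only [a, b]; ring
  have hfl : ⌊b⌋ ≤ ⌊a⌋ := Int.floor_mono (by simp only [a, b]; gcongr; positivity)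
  rw [max_eq_left (by omega)] at hcount
  have key : |(#{m ∈ Ioc 0 N | m ≡ x [MOD d]} : ℚ) - 1 / d * N| ≤ 1 := by
    rw [← Int.cast_natCast, hcount, ← hab, abs_le]
    push_cast
    constructor <;> linarith [Int.floor_le a, Int.lt_floor_add_one a, Int.floor_le b,
      Int.lt_floor_add_one b]
  rw [hset, Set.ncard_coe_finset]
  have := (Rat.cast_le (K := ℝ)).mpr key
  push_cast at this
  exact this

theorem hasDensity_setOf_modEq {d : ℕ} (hd : 0 < d) (x : ℕ) :
    hasDensity {m | m ≡ x [MOD d]} (1 / d) :=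
  hasDensity_of_abs_sub_le 1 (abs_card_setOf_modEq_inter_Icc_sub_le hd x)

theorem iInter_setOf_modEq_eq {ι : Type*} {s : Finset ι} {n a : ι → ℕ} {x : ℕ}
    (hx : ∀ i ∈ s, x ≡ a i [MOD n i]) :
    ⋂ i ∈ s, {m | m ≡ a i [MOD n i]} = {m | m ≡ x [MOD s.lcm n]} := by
  ext m
  simp only [Set.mem_iInter, Set.mem_ofPred_eq, Nat.modEq_iff_dvd, Int.natCast_dvd,
    Finset.lcm_dvd_iff]
  refine forall₂_congr fun i hi => ?_
  rw [← Int.natCast_dvd, ← Int.natCast_dvd, ← Nat.modEq_iff_dvd, ← Nat.modEq_iff_dvd]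
  exact ⟨fun h => h.trans (hx i hi).symm, fun h => h.trans (hx i hi)⟩

theorem Nat.exists_modEq_and_forall_modEq {ι : Type*} (s : Finset ι) {n a : ι → ℕ} {T b : ℕ}
    (hn : (s : Set ι).Pairwise (Function.onFun Nat.Coprime n))
    (hb : ∀ i ∈ s, b ≡ a i [MOD T.gcd (n i)]) :
    ∃ x, x ≡ b [MOD T] ∧ ∀ i ∈ s, x ≡ a i [MOD n i] := by
  classical
  induction s using Finset.induction_on with
  | empty => exact ⟨b, rfl, by simp⟩
  | @insert j s hj ih =>
    rw [Finset.coe_insert, Set.pairwise_insert] at hn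
    obtain ⟨x, hxT, hxs⟩ := ih hn.1 fun i hi => hb i (mem_insert_of_mem hi)
    have hcop : (∏ i ∈ s, n i).Coprime (n j) :=
      Nat.Coprime.prod_left fun i hi => (hn.2 i hi (ne_of_mem_of_not_mem hi hj).symm).2
    have hcompat : x ≡ a j [MOD (T * ∏ i ∈ s, n i).gcd (n j)] := by
      rw [Nat.Coprime.gcd_mul_right_cancel _ hcop]
      exact (hxT.of_dvd (T.gcd_dvd_left _)).trans (hb j (mem_insert_self j s))
    obtain ⟨y, hyx, hyj⟩ := Nat.chineseRemainder' hcompat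
    refine ⟨y, (hyx.of_dvd (dvd_mul_right T _)).trans hxT, fun i hi => ?_⟩
    rcases mem_insert.mp hi with rfl | hi
    · exact hyj
    · exact (hyx.of_dvd ((dvd_prod_of_mem n hi).trans (dvd_mul_left _ T))).trans (hxs i hi)

theorem Nat.Prime.not_pow_dvd_finset_lcm {ι : Type*} {p k : ℕ} (hp : p.Prime) (hk : k ≠ 0)
    {s : Finset ι} {f : ι → ℕ} (hf : ∀ i ∈ s, f i ≠ 0) (h : ∀ i ∈ s, ¬ p ^ k ∣ f i) :
    ¬ p ^ k ∣ s.lcm f := by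
  rw [hp.pow_dvd_iff_le_factorization (Finset.lcm_ne_zero_iff.mpr hf),
    Finset.factorization_lcm hf, Finset.le_sup_iff (Nat.pos_of_ne_zero hk)]
  rintro ⟨i, hi, hki⟩
  exact h i hi ((hp.pow_dvd_iff_le_factorization (hf i hi)).mpr hki)

theorem Nat.sub_one_mul_add_one (q : ℕ) : (q - 1) * (q + 1) = q ^ 2 - 1 := by
  rw [← one_pow 2, Nat.sq_sub_sq, mul_comm, one_pow]

theorem FrSet_term_eq (q K t : ℕ) :
    q * (q - 1) * (q + 1) * (K * q + t) = q ^ 2 * (q ^ 2 - 1) * K + q * (q ^ 2 - 1) * t := by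
  rw [mul_assoc q, Nat.sub_one_mul_add_one]
  ring

theorem Nat.Prime.sq_sub_one_ne_zero {p : ℕ} (hp : p.Prime) : p ^ 2 - 1 ≠ 0 :=
  Nat.sub_ne_zero_of_lt (Nat.one_lt_pow two_ne_zero hp.one_lt)

theorem FrSet_eq_setOf_modEq {q t : ℕ} (ht : t < q) :
    FrSet q t = {m | m ≡ q * (q ^ 2 - 1) * t [MOD q ^ 2 * (q ^ 2 - 1)]} := by
  have hres : q * (q ^ 2 - 1) * t % (q ^ 2 * (q ^ 2 - 1)) = q * (q ^ 2 - 1) * t := by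
    rcases (q ^ 2 - 1).eq_zero_or_pos with h | h
    · simp [h]
    · apply Nat.mod_eq_of_lt
      calc q * (q ^ 2 - 1) * t < q * (q ^ 2 - 1) * q :=
            (Nat.mul_lt_mul_left (Nat.mul_pos (by omega) h)).mpr ht
        _ = q ^ 2 * (q ^ 2 - 1) := by ring
  ext m
  simp only [FrSet, Set.mem_ofPred_eq, FrSet_term_eq]
  constructor
  · rintro ⟨K, rfl⟩
    exact Nat.mul_add_mod _ _ _
  · intro hm
    refine ⟨m / (q ^ 2 * (q ^ 2 - 1)), ?_⟩
    rw [← hres, ← hm, Nat.div_add_mod]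

theorem sq_sub_one_dvd_of_mem_FrSet {q t m : ℕ} (hm : m ∈ FrSet q t) : q ^ 2 - 1 ∣ m := by
  obtain ⟨K, rfl⟩ := hm
  rw [FrSet_term_eq]
  exact Dvd.intro (q ^ 2 * K + q * t) (by ring)

theorem Nat.Prime.not_sq_dvd_of_mem_FrSet {p t m : ℕ} (hp : p.Prime) (ht₀ : 0 < t) (ht : t < p)
    (hm : m ∈ FrSet p t) : ¬ p ^ 2 ∣ m := by
  obtain ⟨K, rfl⟩ := hm
  rw [sq, mul_assoc p, mul_assoc p, Nat.mul_dvd_mul_iff_left hp.pos]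
  intro h
  rcases hp.dvd_mul.mp h with h | h
  · rcases hp.dvd_mul.mp h with h | h
    · exact absurd (Nat.le_of_dvd (by omega) h) (by omega)
    · exact hp.one_lt.ne' (Nat.dvd_one.mp ((Nat.dvd_add_right dvd_rfl).mp h))
  · exact absurd (Nat.le_of_dvd ht₀ ((Nat.dvd_add_right (dvd_mul_left p K)).mp h)) (by omega)

theorem exists_forall_modEq_FrSet_residue {P : Finset ℕ} (hprime : ∀ q ∈ P, q.Prime)
    (hsq : ∀ p ∈ P, ∀ q ∈ P, ¬ p ^ 2 ∣ q ^ 2 - 1) (t : ℕ → ℕ) :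
    ∃ x, ∀ q ∈ P, x ≡ q * (q ^ 2 - 1) * t q [MOD q ^ 2 * (q ^ 2 - 1)] := by
  set T := P.lcm fun q => q ^ 2 - 1
  have hT : ∀ q ∈ P, ¬ q ^ 2 ∣ T := fun q hq =>
    (hprime q hq).not_pow_dvd_finset_lcm two_ne_zero
      (fun r hr => (hprime r hr).sq_sub_one_ne_zero) (hsq q hq)
  have hcop : (P : Set ℕ).Pairwise (Function.onFun Nat.Coprime (· ^ 2)) := fun p hp q hq hpq =>
    Nat.Coprime.pow 2 2 ((Nat.coprime_primes (hprime p hp) (hprime q hq)).mpr hpq)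
  -- `gcd T (q ^ 2)` is a power of `q` other than `q ^ 2`, so it divides `q`.
  have hcompat : ∀ q ∈ P, 0 ≡ q * (q ^ 2 - 1) * t q [MOD T.gcd (q ^ 2)] := by
    intro q hq
    obtain ⟨i, hi, hgcd⟩ := (Nat.dvd_prime_pow (hprime q hq)).mp (T.gcd_dvd_right (q ^ 2))
    have hi1 : i ≤ 1 := by
      by_contra! hi1
      exact hT q hq (le_antisymm hi hi1 ▸ hgcd ▸ T.gcd_dvd_left _)
    refine (Nat.modEq_zero_iff_dvd.mpr ?_).symm
    rw [hgcd, mul_assoc]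
    exact (pow_dvd_pow q hi1).trans (by rw [pow_one]; exact dvd_mul_right _ _)
  obtain ⟨x, hxT, hx⟩ := Nat.exists_modEq_and_forall_modEq P hcop hcompat
  refine ⟨x, fun q hq => ?_⟩
  have hq1 : 1 ≤ q ^ 2 := Nat.one_le_pow _ _ (hprime q hq).pos
  have hco : (q ^ 2).Coprime (q ^ 2 - 1) :=
    (Nat.coprime_self_sub_right hq1).mpr (Nat.coprime_one_right _)
  refine (Nat.modEq_and_modEq_iff_modEq_mul hco).mp ⟨hx q hq, ?_⟩
  have hx0 : x ≡ 0 [MOD q ^ 2 - 1] := hxT.of_dvd (Finset.dvd_lcm (f := fun q => q ^ 2 - 1) hq)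
  exact hx0.trans (Nat.modEq_zero_iff_dvd.mpr (Dvd.intro_left (q * t q) (by ring))).symm

theorem density_inter_FrSet_general (P : Finset ℕ)
    (hprime : ∀ q ∈ P, q.Prime ∧ Odd q) (s : ℕ → ℕ)
    (hs : ∀ q ∈ P, 0 < s q ∧ s q < q) :
    hasDensity (⋂ q ∈ P, FrSet q (s q))
      (if ∃ p ∈ P, ∃ q ∈ P, p ^ 2 ∣ q ^ 2 - 1 then 0
       else 1 / ((P.lcm (fun q => q ^ 4 - q ^ 2) : ℕ) : ℝ)) := by
  split_ifs with hsq
  · obtain ⟨p, hp, q, hq, hpq⟩ := hsq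
    have hempty : ⋂ q ∈ P, FrSet q (s q) = ∅ := by
      refine Set.eq_empty_of_forall_notMem fun m hm => ?_
      rw [Set.mem_iInter₂] at hm
      exact (hprime p hp).1.not_sq_dvd_of_mem_FrSet (hs p hp).1 (hs p hp).2 (hm p hp)
        (hpq.trans (sq_sub_one_dvd_of_mem_FrSet (hm q hq)))
    simp [hempty, hasDensity]
  · push Not at hsq
    obtain ⟨x, hx⟩ := exists_forall_modEq_FrSet_residue (fun q hq => (hprime q hq).1) hsq s
    have hlcm : P.lcm (fun q => q ^ 4 - q ^ 2) = P.lcm (fun q => q ^ 2 * (q ^ 2 - 1)) :=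
      Finset.lcm_congr rfl fun q _ => by rw [Nat.mul_sub_one, ← pow_add]
    have hpos : 0 < P.lcm (fun q => q ^ 2 * (q ^ 2 - 1)) := Nat.pos_of_ne_zero <|
      Finset.lcm_ne_zero_iff.mpr fun q hq =>
        Nat.mul_ne_zero (pow_ne_zero 2 (hprime q hq).1.ne_zero) (hprime q hq).1.sq_sub_one_ne_zero
    rw [Set.iInter₂_congr fun q hq => FrSet_eq_setOf_modEq (hs q hq).2,
      iInter_setOf_modEq_eq hx, hlcm]
    exact hasDensity_setOf_modEq hpos x

theorem density_inter_FrSet (P : Finset ℕ) (hP : P.Nonempty)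
    (hprime : ∀ q ∈ P, q.Prime ∧ Odd q) (s : ℕ → ℕ)
    (hs : ∀ q ∈ P, 0 < s q ∧ s q < q) :
    hasDensity (⋂ q ∈ P, FrSet q (s q))
      (if ∃ p ∈ P, ∃ q ∈ P, p ^ 2 ∣ q ^ 2 - 1 then 0
       else 1 / ((P.lcm (fun q => q ^ 4 - q ^ 2) : ℕ) : ℝ)) :=
  density_inter_FrSet_general P hprime s hs
end

section
/- For a prime p define 𝔘_p := {n ∈ ℕ : p³ − p ∣ n and p² ∤ n}. Let 𝒫 be a nonempty finite family of odd primes. Then the asymptotic density of ⋂_{q ∈ 𝒫} 𝔘_q exists and equals 0 if there exist p, q ∈ 𝒫 with p² ∣ q² − 1, and equals (∏_{q ∈ 𝒫} (q − 1)) / lcm{q⁴ − q² : q ∈ 𝒫} otherwise. -/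
/-- `𝔘_p = {n : p³ − p ∣ n and p² ∤ n}`. -/
def Uset (p : ℕ) : Set ℕ := {n | (p ^ 3 - p) ∣ n ∧ ¬ p ^ 2 ∣ n}

/-!
Put `L = lcm {q³ − q : q ∈ 𝒫}` and `Q = ∏ q`. If `p² ∣ q² − 1 ∣ q³ − q`, then `𝔘_p ∩ 𝔘_q = ∅`.
Otherwise every `q ∈ 𝒫` divides `L` exactly once (it divides `q³ − q = q (q² − 1)` once and
`q² ∤ p³ − p` for the other `p`), so `n ∈ ⋂ 𝔘_q` iff `n = L k` with `k` coprime to `Q`. This set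
is periodic modulo `L Q = lcm {q⁴ − q²}`, and one period contains `φ Q = ∏ (q − 1)` of its
elements.
-/

open Filter Topology Function

namespace Nat

variable {p : ℕ → Prop} [DecidablePred p] {m : ℕ}

theorem count_mul_add_of_periodic (hp : Periodic p m) (k r : ℕ) :
    count p (m * k + r) = k * count p m + count p r := by
  induction k with
  | zero => simp
  | succ k ih =>
    have hshift : (fun j => p (m + j)) = p := funext fun j => by rw [add_comm]; exact hp j
    rw [show m * (k + 1) + r = m + (m * k + r) by ring, count_add]
    simp only [hshift, ih]
    ring

theorem abs_count_sub_le_of_periodic (hm : 0 < m) (hp : Periodic p m) (N : ℕ) :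
    |(count p N : ℝ) - count p m / m * N| ≤ m := by
  set c : ℝ := (count p m : ℝ)
  set r := N % m
  have hmR : (0 : ℝ) < m := by exact_mod_cast hm
  have hcount : (count p N : ℝ) = (N / m : ℕ) * c + count p r := by
    have h := count_mul_add_of_periodic hp (N / m) r
    rw [Nat.div_add_mod] at h
    rw [h]; push_cast; ring
  have hN : (N : ℝ) = m * (N / m : ℕ) + r := by exact_mod_cast (Nat.div_add_mod N m).symm
  have hdiff : (count p N : ℝ) - c / m * N = count p r - c / m * r := by
    rw [hcount, hN]; field_simp; ring
  have hcr : (count p r : ℝ) ≤ r := by exact_mod_cast count_le p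
  have hrm : (r : ℝ) ≤ m := by exact_mod_cast (Nat.mod_lt N hm).le
  have hc : c / m ≤ 1 :=
    (div_le_one hmR).2 (show (count p m : ℝ) ≤ m by exact_mod_cast count_le p)
  have hcr' : c / m * r ≤ r := mul_le_of_le_one_left r.cast_nonneg hc
  rw [hdiff, abs_le]
  constructor <;> nlinarith [(count p r).cast_nonneg (α := ℝ), r.cast_nonneg (α := ℝ),
    mul_nonneg (div_nonneg (count p m).cast_nonneg hmR.le) r.cast_nonneg]

theorem ncard_setOf_inter_Icc_add_count_one (p : ℕ → Prop) [DecidablePred p] (N : ℕ) :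
    ({n | p n} ∩ Set.Icc 1 N).ncard + count p 1 = count p (N + 1) := by
  have hcoe : {n | p n} ∩ Set.Icc 1 N = ↑({n ∈ Finset.Icc 1 N | p n}) := by
    ext; simp [and_comm]
  rw [hcoe, Set.ncard_coe_finset, count_one, count_eq_card_filter_range, range_succ_eq_Icc_zero,
    ← Finset.insert_Icc_add_one_left_eq_Icc N.zero_le, Finset.filter_insert, zero_add]
  split_ifs
  · rw [Finset.card_insert_of_notMem (by simp)]
  · rfl

end Nat

theorem tendsto_div_of_abs_sub_mul_le {f : ℕ → ℝ} {d C : ℝ} (h : ∀ N, |f N - d * N| ≤ C) :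
    Tendsto (fun N : ℕ => f N / N) atTop (𝓝 d) := by
  rw [tendsto_iff_norm_sub_tendsto_zero]
  refine squeeze_zero' (Eventually.of_forall fun _ => norm_nonneg _) ?_
    (tendsto_const_div_atTop_nhds_zero_nat C)
  filter_upwards [eventually_gt_atTop 0] with N hN
  have hNR : (0 : ℝ) < N := by exact_mod_cast hN
  rw [Real.norm_eq_abs, show f N / N - d = (f N - d * N) / N by field_simp, abs_div,
    abs_of_pos hNR]
  gcongr
  exact h N

theorem hasDensity_setOf_of_periodic {p : ℕ → Prop} [DecidablePred p] {m : ℕ} (hm : 0 < m)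
    (hp : Periodic p m) : hasDensity {n | p n} (Nat.count p m / m) := by
  refine tendsto_div_of_abs_sub_mul_le (C := m + 1) fun N => ?_
  have hncard := Nat.ncard_setOf_inter_Icc_add_count_one p N
  have hperiod := Nat.abs_count_sub_le_of_periodic hm hp (N + 1)
  have hone : (Nat.count p 1 : ℝ) ≤ 1 := by exact_mod_cast Nat.count_le p
  have hmR : (0 : ℝ) < m := by exact_mod_cast hm
  have hd : (Nat.count p m : ℝ) / m ≤ 1 :=
    (div_le_one hmR).2 (by exact_mod_cast Nat.count_le p)
  rw [← @Nat.cast_inj ℝ] at hncard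
  push_cast at hncard hperiod
  rw [abs_le] at hperiod ⊢
  constructor <;> nlinarith [(Nat.count p 1).cast_nonneg (α := ℝ)]

theorem Function.Periodic.dvd_and_div {p : ℕ → Prop} {m : ℕ} (hp : Periodic p m) (L : ℕ) :
    Periodic (fun n => L ∣ n ∧ p (n / L)) (L * m) := by
  intro n
  rcases L.eq_zero_or_pos with rfl | hL
  · simp
  · simp only [Nat.add_mul_div_left n m hL, hp (n / L), Nat.dvd_add_left (dvd_mul_right L m)]

theorem Nat.count_dvd_and_div_mul (p : ℕ → Prop) [DecidablePred p] {L : ℕ} (hL : 0 < L)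
    (m : ℕ) : count (fun n => L ∣ n ∧ p (n / L)) (L * m) = count p m := by
  rw [count_eq_card_filter_range, count_eq_card_filter_range,
    ← Finset.card_map ⟨(L * ·), mul_right_injective₀ hL.ne'⟩ (s := {k ∈ Finset.range m | p k})]
  congr 1
  ext n
  simp only [Finset.mem_filter, Finset.mem_range, Finset.mem_map, Function.Embedding.coeFn_mk]
  constructor
  · rintro ⟨hn, ⟨k, rfl⟩, hk⟩
    rw [Nat.mul_div_cancel_left k hL] at hk
    exact ⟨k, ⟨Nat.lt_of_mul_lt_mul_left hn, hk⟩, rfl⟩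
  · rintro ⟨k, ⟨hk, hpk⟩, rfl⟩
    rw [Nat.mul_div_cancel_left k hL]
    exact ⟨Nat.mul_lt_mul_of_pos_left hk hL, dvd_mul_right L k, hpk⟩

theorem hasDensity_dvd_and_div {p : ℕ → Prop} [DecidablePred p] {L m : ℕ} (hL : 0 < L)
    (hm : 0 < m) (hp : Periodic p m) :
    hasDensity {n | L ∣ n ∧ p (n / L)} (Nat.count p m / (L * m)) := by
  have h := hasDensity_setOf_of_periodic (mul_pos hL hm) (hp.dvd_and_div L)
  rwa [Nat.count_dvd_and_div_mul p hL, Nat.cast_mul] at h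

namespace Nat

theorem cube_sub_self_eq (q : ℕ) : q ^ 3 - q = q * (q ^ 2 - 1) := by
  rw [Nat.mul_sub_one, ← pow_succ']

theorem cube_sub_self_mul_self (q : ℕ) : (q ^ 3 - q) * q = q ^ 4 - q ^ 2 := by
  rw [Nat.sub_mul, ← pow_succ, sq]

theorem Prime.cube_sub_self_ne_zero {q : ℕ} (hq : q.Prime) : q ^ 3 - q ≠ 0 :=
  Nat.sub_ne_zero_of_lt (lt_self_pow₀ hq.one_lt (by norm_num))

theorem Prime.sq_dvd_sq_sub_one_of_sq_dvd_cube_sub_self {p q : ℕ} (hq : q.Prime) (hp : p.Prime)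
    (h : q ^ 2 ∣ p ^ 3 - p) : q ^ 2 ∣ p ^ 2 - 1 := by
  rw [cube_sub_self_eq] at h
  by_cases hqp : q ∣ p
  · obtain rfl := (Nat.prime_dvd_prime_iff_eq hq hp).1 hqp
    have h' : q * q ∣ q * (q ^ 2 - 1) := by rwa [← sq]
    rw [Nat.mul_dvd_mul_iff_left hq.pos] at h'
    have hone : q ∣ q ^ 2 - (q ^ 2 - 1) := Nat.dvd_sub (dvd_pow_self q two_ne_zero) h'
    rw [Nat.sub_sub_self (Nat.one_le_pow _ _ hq.pos)] at hone
    exact absurd hone hq.not_dvd_one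
  · exact (Nat.Coprime.pow_left 2 ((hq.coprime_iff_not_dvd).2 hqp)).dvd_of_dvd_mul_left h

theorem Prime.not_pow_dvd_lcm {ι : Type*} {s : Finset ι} {f : ι → ℕ} {q k : ℕ} (hq : q.Prime)
    (hk : k ≠ 0) (hf : ∀ i ∈ s, f i ≠ 0) (h : ∀ i ∈ s, ¬ q ^ k ∣ f i) : ¬ q ^ k ∣ s.lcm f := by
  rw [hq.pow_dvd_iff_le_factorization (Finset.lcm_ne_zero_iff.2 hf), Finset.factorization_lcm hf,
    not_le, Finset.sup_lt_iff (Nat.pos_of_ne_zero hk)]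
  exact fun i hi => not_le.1 fun hle => h i hi ((hq.pow_dvd_iff_le_factorization (hf i hi)).2 hle)

theorem exists_eq_mul_not_dvd {q L : ℕ} (hqL : q ∣ L) (hqL2 : ¬ q ^ 2 ∣ L) :
    ∃ L', L = q * L' ∧ ¬ q ∣ L' := by
  obtain ⟨L', rfl⟩ := hqL
  exact ⟨L', rfl, fun h => hqL2 (by rw [sq]; exact mul_dvd_mul_left q h)⟩

theorem Prime.sq_dvd_mul_iff {q L : ℕ} (hq : q.Prime) (hqL : q ∣ L) (hqL2 : ¬ q ^ 2 ∣ L)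
    (k : ℕ) : q ^ 2 ∣ L * k ↔ q ∣ k := by
  obtain ⟨L', rfl, hL'⟩ := exists_eq_mul_not_dvd hqL hqL2
  rw [sq, mul_assoc, Nat.mul_dvd_mul_iff_left hq.pos, hq.dvd_mul, or_iff_right hL']

theorem Prime.mul_dvd_of_sq_dvd {q L M : ℕ} (hq : q.Prime) (hqL : q ∣ L) (hqL2 : ¬ q ^ 2 ∣ L)
    (hLM : L ∣ M) (hqM : q ^ 2 ∣ M) : L * q ∣ M := by
  obtain ⟨L', rfl, hL'⟩ := exists_eq_mul_not_dvd hqL hqL2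
  have hcop : (q ^ 2).Coprime L' := Nat.Coprime.pow_left 2 ((hq.coprime_iff_not_dvd).2 hL')
  rw [show q * L' * q = q ^ 2 * L' by ring]
  exact hcop.mul_dvd_of_dvd_of_dvd hqM ((dvd_mul_left L' q).trans hLM)

theorem totient_prod_primes {P : Finset ℕ} (hP : ∀ q ∈ P, q.Prime) :
    φ (∏ q ∈ P, q) = ∏ q ∈ P, (q - 1) := by
  have h := totient_mul_prod_primeFactors (∏ q ∈ P, q)
  rw [primeFactors_prod hP, mul_comm (∏ q ∈ P, q)] at h
  exact Nat.eq_of_mul_eq_mul_right (Finset.prod_pos fun q hq => (hP q hq).pos) h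

end Nat

theorem Uset_inter_Uset_eq_empty {p q : ℕ} (h : p ^ 2 ∣ q ^ 2 - 1) : Uset p ∩ Uset q = ∅ :=
  Set.eq_empty_of_forall_notMem fun _ ⟨hp, hq⟩ =>
    hp.2 (h.trans ((Nat.cube_sub_self_eq q ▸ dvd_mul_left _ _).trans hq.1))

section NondegenerateFamily

variable {P : Finset ℕ}

theorem dvd_lcm_cube_sub_self {q : ℕ} (hq : q ∈ P) : q ∣ P.lcm (fun p => p ^ 3 - p) :=
  (Nat.cube_sub_self_eq q ▸ dvd_mul_right q _).trans (Finset.dvd_lcm hq)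

variable (hprime : ∀ q ∈ P, q.Prime)
include hprime

theorem lcm_cube_sub_self_pos : 0 < P.lcm (fun p => p ^ 3 - p) :=
  Nat.pos_of_ne_zero <| Finset.lcm_ne_zero_iff.2 fun q hq => (hprime q hq).cube_sub_self_ne_zero

variable (hnd : ∀ p ∈ P, ∀ q ∈ P, ¬ p ^ 2 ∣ q ^ 2 - 1)
include hnd

theorem not_sq_dvd_lcm_cube_sub_self {q : ℕ} (hq : q ∈ P) :
    ¬ q ^ 2 ∣ P.lcm (fun p => p ^ 3 - p) :=
  (hprime q hq).not_pow_dvd_lcm two_ne_zero (fun p hp => (hprime p hp).cube_sub_self_ne_zero)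
    fun p hp h => hnd q hq p hp ((hprime q hq).sq_dvd_sq_sub_one_of_sq_dvd_cube_sub_self
      (hprime p hp) h)

theorem iInter_Uset_eq :
    ⋂ q ∈ P, Uset q = {n | P.lcm (fun q => q ^ 3 - q) ∣ n ∧
      Nat.Coprime (∏ q ∈ P, q) (n / P.lcm (fun q => q ^ 3 - q))} := by
  set L := P.lcm (fun q => q ^ 3 - q)
  have hL : 0 < L := lcm_cube_sub_self_pos hprime
  have hsq (q : ℕ) (hq : q ∈ P) (k : ℕ) : q ^ 2 ∣ L * k ↔ ¬ q.Coprime k := by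
    rw [(hprime q hq).sq_dvd_mul_iff (dvd_lcm_cube_sub_self hq)
      (not_sq_dvd_lcm_cube_sub_self hprime hnd hq), (hprime q hq).coprime_iff_not_dvd, not_not]
  ext n
  simp only [Set.mem_iInter, Uset, Set.mem_ofPred_eq, Nat.coprime_prod_left_iff]
  constructor
  · intro h
    obtain ⟨k, rfl⟩ : L ∣ n := Finset.lcm_dvd fun q hq => (h q hq).1
    rw [Nat.mul_div_cancel_left k hL]
    exact ⟨dvd_mul_right L k, fun q hq => not_not.1 ((hsq q hq k).not.1 (h q hq).2)⟩
  · rintro ⟨⟨k, rfl⟩, hk⟩ q hq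
    rw [Nat.mul_div_cancel_left k hL] at hk
    exact ⟨(Finset.dvd_lcm (f := fun p => p ^ 3 - p) hq).trans (dvd_mul_right L k),
      (hsq q hq k).not.2 (not_not.2 (hk q hq))⟩

theorem lcm_pow_four_sub_sq_eq :
    P.lcm (fun q => q ^ 4 - q ^ 2) = P.lcm (fun q => q ^ 3 - q) * ∏ q ∈ P, q := by
  set L := P.lcm (fun q => q ^ 3 - q)
  set M := P.lcm (fun q => q ^ 4 - q ^ 2)
  have hLM : L ∣ M := Finset.lcm_dvd fun q hq =>
    (Nat.cube_sub_self_mul_self q ▸ dvd_mul_right _ q).trans (Finset.dvd_lcm hq)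
  refine Nat.dvd_antisymm (Finset.lcm_dvd fun q hq => ?_) ?_
  · rw [← Nat.cube_sub_self_mul_self]
    exact mul_dvd_mul (Finset.dvd_lcm hq) (Finset.dvd_prod_of_mem _ hq)
  · rw [← Nat.dvd_div_iff_mul_dvd hLM]
    refine Finset.prod_primes_dvd _ (fun q hq => (hprime q hq).prime) fun q hq => ?_
    rw [Nat.dvd_div_iff_mul_dvd hLM]
    refine (hprime q hq).mul_dvd_of_sq_dvd (dvd_lcm_cube_sub_self hq)
      (not_sq_dvd_lcm_cube_sub_self hprime hnd hq) hLM ?_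
    exact (Nat.dvd_sub (pow_dvd_pow q (by norm_num)) dvd_rfl).trans (Finset.dvd_lcm hq)

end NondegenerateFamily

theorem density_inter_Uset_general (P : Finset ℕ)
    (hprime : ∀ q ∈ P, q.Prime ∧ Odd q) :
    hasDensity (⋂ q ∈ P, Uset q)
      (if ∃ p ∈ P, ∃ q ∈ P, p ^ 2 ∣ q ^ 2 - 1 then 0
       else (∏ q ∈ P, ((q : ℝ) - 1)) / ((P.lcm (fun q => q ^ 4 - q ^ 2) : ℕ) : ℝ)) := by
  have hP : ∀ q ∈ P, q.Prime := fun q hq => (hprime q hq).1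
  split_ifs with hdeg
  · obtain ⟨p, hp, q, hq, hpq⟩ := hdeg
    have hempty : ⋂ r ∈ P, Uset r = ∅ := Set.subset_eq_empty
      (Set.subset_inter (Set.biInter_subset_of_mem hp) (Set.biInter_subset_of_mem hq))
      (Uset_inter_Uset_eq_empty hpq)
    simp [hasDensity, hempty]
  · push Not at hdeg
    have hQ : 0 < ∏ q ∈ P, q := Finset.prod_pos fun q hq => (hP q hq).pos
    have h := hasDensity_dvd_and_div (lcm_cube_sub_self_pos hP) hQ (Nat.periodic_coprime _)
    rw [Nat.count_eq_card_filter_range, ← Nat.totient_eq_card_coprime,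
      Nat.totient_prod_primes hP, ← Nat.cast_mul, ← lcm_pow_four_sub_sq_eq hP hdeg] at h
    have hcast : ((∏ q ∈ P, (q - 1) : ℕ) : ℝ) = ∏ q ∈ P, ((q : ℝ) - 1) := by
      rw [Nat.cast_prod]
      exact Finset.prod_congr rfl fun q hq => by rw [Nat.cast_sub (hP q hq).one_le, Nat.cast_one]
    rwa [iInter_Uset_eq hP hdeg, ← hcast]

theorem density_inter_Uset (P : Finset ℕ) (hP : P.Nonempty)
    (hprime : ∀ q ∈ P, q.Prime ∧ Odd q) :
    hasDensity (⋂ q ∈ P, Uset q)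
      (if ∃ p ∈ P, ∃ q ∈ P, p ^ 2 ∣ q ^ 2 - 1 then 0
       else (∏ q ∈ P, ((q : ℝ) - 1)) / ((P.lcm (fun q => q ^ 4 - q ^ 2) : ℕ) : ℝ)) :=
  density_inter_Uset_general P hprime
end
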